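/- arXiv:2604.08740 — 12 statements merged into one kernel-verified Lean document; each statement's English description precedes it below -/
import Mathlib

section
/- Let K be a field and x : V → V an endomorphism of a finite-dimensional K-vector space whose minimal polynomial splits into linear factors in K[T]. Then there exist unique endomorphisms s, n : V → V with x = s + n, s diagonalizable, n nilpotent, and s ∘ n = n ∘ s. -/
/-!
The radical `∏ (X - μ)` of the split minimal polynomial is separable, so the Jordan–Chevalley
construction gives `x = n₀ + s₀` with `n₀` nilpotent, `s₀` semisimple and both polynomials in `x`.
A semisimple `s₀` with `x - s₀` nilpotent and commuting with `x` acts as the scalar `μ` on the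
generalized `μ`-eigenspace of `x`; as these span `V` (the minimal polynomial splits), `s₀` is
diagonalizable. Conversely, for any admissible `(s, n)`, the `μ`-eigenspace of `s` lies in the
generalized `μ`-eigenspace of `x`, since `x - μ` acts there as the nilpotent `n`. Hence `s` and `s₀`
agree on the eigenvectors of `s`, which span `V`.
-/

open Polynomial

/-- An endomorphism is diagonalizable if `V` admits a basis of eigenvectors. -/
def IsDiagonalizable {K V : Type} [Field K] [AddCommGroup V] [Module K V]
    (s : Module.End K V) : Prop :=
  ∃ (ι : Type) (b : Module.Basis ι K V), ∀ i, ∃ μ : K, s (b i) = μ • b i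

open Function

namespace Polynomial

theorem ker_aeval_prod_eq_iSup_ker_aeval {R M ι : Type*} [CommRing R] [AddCommGroup M]
    [Module R M] (f : Module.End R M) {s : Finset ι} {p : ι → R[X]}
    (hp : (s : Set ι).Pairwise (IsCoprime on p)) :
    LinearMap.ker (aeval f (∏ i ∈ s, p i)) = ⨆ i ∈ s, LinearMap.ker (aeval f (p i)) := by
  classical
  induction s using Finset.induction_on with
  | empty => simp [Module.End.one_eq_id]
  | insert a s ha ih =>
    rw [Finset.coe_insert, Set.pairwise_insert] at hp
    have hcop : IsCoprime (p a) (∏ i ∈ s, p i) :=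
      IsCoprime.prod_right fun i hi => (hp.2 i hi (ne_of_mem_of_not_mem hi ha).symm).1
    rw [Finset.prod_insert ha, ← sup_ker_aeval_eq_ker_aeval_mul_of_coprime f hcop, ih hp.1,
      Finset.iSup_insert]

variable {R : Type*} [CommRing R] [IsDomain R] [DecidableEq R] {p : R[X]}

theorem Splits.eq_prod_X_sub_C_pow_rootMultiplicity (hp : p.Splits) (hm : p.Monic) :
    p = ∏ a ∈ p.roots.toFinset, (X - C a) ^ p.rootMultiplicity a := by
  conv_lhs => rw [hp.eq_prod_roots_of_monic hm, prod_multiset_root_eq_finset_root]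

theorem Splits.dvd_prod_X_sub_C_pow_card_roots (hp : p.Splits) (hm : p.Monic) :
    p ∣ (∏ a ∈ p.roots.toFinset, (X - C a)) ^ Multiset.card p.roots := by
  conv_lhs => rw [hp.eq_prod_X_sub_C_pow_rootMultiplicity hm]
  rw [← Finset.prod_pow]
  exact Finset.prod_dvd_prod_of_dvd _ _ fun a _ =>
    pow_dvd_pow _ (count_roots p ▸ Multiset.count_le_card a _)

end Polynomial

namespace Module.End

variable {K V : Type*} [Field K] [AddCommGroup V] [Module K V]

theorem ker_aeval_X_sub_C_pow_eq_genEigenspace (f : End K V) (μ : K) (k : ℕ) :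
    LinearMap.ker (aeval f ((X - C μ) ^ k)) = f.genEigenspace μ k := by
  rw [genEigenspace_nat, map_pow, map_sub, aeval_X, aeval_C, Algebra.algebraMap_eq_smul_one]

theorem iSup_maxGenEigenspace_eq_top_of_minpoly_splits [FiniteDimensional K V] {f : End K V}
    (h : (minpoly K f).Splits) : ⨆ μ, f.maxGenEigenspace μ = ⊤ := by
  classical
  have hker : LinearMap.ker (aeval f (minpoly K f)) = ⊤ := by
    rw [minpoly.aeval, LinearMap.ker_zero]
  rw [h.eq_prod_X_sub_C_pow_rootMultiplicity (minpoly.monic (Algebra.IsIntegral.isIntegral f)),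
    ker_aeval_prod_eq_iSup_ker_aeval f
      fun a _ b _ hab => (pairwise_coprime_X_sub_C (fun _ _ h => h) hab).pow] at hker
  refine top_unique (hker ▸ iSup₂_le fun μ _ => ?_)
  rw [ker_aeval_X_sub_C_pow_eq_genEigenspace]
  exact (f.genEigenspace_le_maximal μ _).trans (le_iSup _ μ)

theorem exists_isNilpotent_isSemisimple_of_minpoly_splits [FiniteDimensional K V] {f : End K V}
    (h : (minpoly K f).Splits) :
    ∃ᵉ (n ∈ Algebra.adjoin K {f}) (s ∈ Algebra.adjoin K {f}),
      IsNilpotent n ∧ IsSemisimple s ∧ f = n + s := by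
  classical
  exact exists_isNilpotent_isSemisimple_of_separable_of_dvd_pow
    (separable_prod_X_sub_C_iff'.mpr fun _ _ _ _ h => h)
    (h.dvd_prod_X_sub_C_pow_card_roots (minpoly.monic (Algebra.IsIntegral.isIntegral f)))

theorem eq_of_iSup_eigenspace_eq_top {s t : End K V}
    (h : ⨆ μ, s.eigenspace μ = ⊤) (hle : ∀ μ, s.eigenspace μ ≤ t.eigenspace μ) : s = t := by
  refine sub_eq_zero.mp (LinearMap.ker_eq_top.mp (top_unique (h ▸ iSup_le fun μ v hv => ?_)))
  rw [LinearMap.mem_ker, LinearMap.sub_apply, mem_eigenspace_iff.mp hv,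
    mem_eigenspace_iff.mp (hle μ hv), sub_self]

variable {n s : End K V}

theorem maxGenEigenspace_add_le_eigenspace (hc : Commute n s) (hn : IsNilpotent n)
    (hs : s.IsFinitelySemisimple) (μ : K) : (n + s).maxGenEigenspace μ ≤ s.eigenspace μ :=
  fun _ hm => mem_eigenspace_iff.mpr <| apply_eq_of_mem_of_comm_of_isFinitelySemisimple_of_isNil
    hm (hc.add_left (Commute.refl s)) hs (by rwa [add_sub_cancel_right])

theorem eigenspace_le_maxGenEigenspace_add (hc : Commute n s) (hn : IsNilpotent n) (μ : K) :
    s.eigenspace μ ≤ (n + s).maxGenEigenspace μ := by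
  intro v hv
  obtain ⟨k, hk⟩ := hn
  have hpow : ∀ j : ℕ, ((n + s - μ • 1) ^ j) v = (n ^ j) v := by
    intro j
    induction j with
    | zero => rfl
    | succ j ih =>
      have hnv : (n ^ j) v ∈ s.eigenspace μ :=
        mapsTo_genEigenspace_of_comm (hc.pow_left j).symm μ 1 hv
      rw [pow_succ', mul_apply, ih, add_sub_assoc, LinearMap.add_apply, pow_succ', mul_apply]
      simp [mem_eigenspace_iff.mp hnv]
  exact (mem_maxGenEigenspace _ _ _).mpr ⟨k, by simpa [hk] using hpow k⟩

end Module.End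

section Diagonalizable

variable {K V : Type} [Field K] [AddCommGroup V] [Module K V]

theorem isDiagonalizable_iff_iSup_eigenspace_eq_top (s : Module.End K V) :
    IsDiagonalizable s ↔ ⨆ μ, s.eigenspace μ = ⊤ := by
  constructor
  · rintro ⟨ι, b, hb⟩
    rw [eq_top_iff, ← b.span_eq, Submodule.span_le, Set.range_subset_iff]
    intro i
    obtain ⟨μ, hμ⟩ := hb i
    exact Submodule.mem_iSup_of_mem μ (Module.End.mem_eigenspace_iff.mpr hμ)
  · intro h
    set E : Set V := {v | ∃ μ : K, s v = μ • v}
    have hE : ⊤ ≤ Submodule.span K E := h ▸ iSup_le fun μ v hv =>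
      Submodule.subset_span ⟨μ, Module.End.mem_eigenspace_iff.mp hv⟩
    obtain ⟨B, hBE, hBspan, hBli⟩ := exists_linearIndependent K E
    refine ⟨B, Module.Basis.mk hBli (by rwa [Subtype.range_coe, hBspan]), fun i => ?_⟩
    rw [Module.Basis.mk_apply]
    exact hBE i.2

end Diagonalizable

theorem jordan_chevalley_split {K V : Type} [Field K] [AddCommGroup V] [Module K V]
    [FiniteDimensional K V] (x : Module.End K V)
    (hsplit : (minpoly K x).Splits) :
    ∃! p : Module.End K V × Module.End K V,
      x = p.1 + p.2 ∧ IsDiagonalizable p.1 ∧ IsNilpotent p.2 ∧ Commute p.1 p.2 := by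
  obtain ⟨n₀, hn₀, s₀, hs₀, hn₀_nil, hs₀_ss, hx₀⟩ :=
    Module.End.exists_isNilpotent_isSemisimple_of_minpoly_splits hsplit
  have hc₀ : Commute n₀ s₀ := Algebra.commute_of_mem_adjoin_singleton_of_commute hs₀
    (Algebra.commute_of_mem_adjoin_self hn₀).symm
  have hle₀ : ∀ μ, x.maxGenEigenspace μ ≤ s₀.eigenspace μ := hx₀ ▸
    Module.End.maxGenEigenspace_add_le_eigenspace hc₀ hn₀_nil hs₀_ss.isFinitelySemisimple
  have hdiag₀ : ⨆ μ, s₀.eigenspace μ = ⊤ :=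
    top_unique <| Module.End.iSup_maxGenEigenspace_eq_top_of_minpoly_splits hsplit ▸ iSup_mono hle₀
  refine ⟨(s₀, n₀), ⟨hx₀.trans (add_comm n₀ s₀),
    (isDiagonalizable_iff_iSup_eigenspace_eq_top s₀).mpr hdiag₀, hn₀_nil, hc₀.symm⟩, ?_⟩
  rintro ⟨s, n⟩ ⟨hx, hs, hn, hc⟩
  have hle : ∀ μ, s.eigenspace μ ≤ x.maxGenEigenspace μ := (add_comm s n ▸ hx) ▸
    Module.End.eigenspace_le_maxGenEigenspace_add hc.symm hn
  have hs_eq : s = s₀ := Module.End.eq_of_iSup_eigenspace_eq_top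
    ((isDiagonalizable_iff_iSup_eigenspace_eq_top s).mp hs) fun μ => (hle μ).trans (hle₀ μ)
  subst hs_eq
  exact Prod.ext rfl (add_left_cancel (hx.symm.trans (hx₀.trans (add_comm n₀ s))))
end

section
/- Let K be a field and x : V → V an endomorphism of a finite-dimensional K-vector space such that every irreducible factor of the minimal polynomial of x is separable. Then x admits a Jordan-Chevalley decomposition: x = s + n with s semisimple, n nilpotent, and s ∘ n = n ∘ s. -/
open Polynomial

/-- An irreducible `p` dividing both `g = p * q` and `g' = p' * q + p * q'` divides `p' * q`,
hence `q` as `p` is separable, so `p ^ 2 ∣ g`. -/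
theorem Polynomial.Squarefree.separable_of_forall_irreducible_dvd {K : Type*} [Field K]
    {g : K[X]} (sqf : Squarefree g) (hsep : ∀ p : K[X], Irreducible p → p ∣ g → p.Separable) :
    g.Separable := by
  refine isCoprime_of_irreducible_dvd (sqf.ne_zero ·.1) ?_
  rintro p hp ⟨q, rfl⟩ hdvd
  have hpq : p ∣ q := by
    rw [derivative_mul, dvd_add_left (dvd_mul_right p _)] at hdvd
    exact (hsep p hp (dvd_mul_right p q)).dvd_of_dvd_mul_left hdvd
  exact hp.not_isUnit (sqf p (mul_dvd_mul_left p hpq))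

namespace Module.End

variable {K V : Type*} [Field K] [AddCommGroup V] [Module K V] [FiniteDimensional K V]

theorem exists_isNilpotent_isSemisimple_of_forall_irreducible_dvd_separable (f : End K V)
    (hsep : ∀ g : K[X], Irreducible g → g ∣ minpoly K f → g.Separable) :
    ∃ᵉ (n ∈ Algebra.adjoin K {f}) (s ∈ Algebra.adjoin K {f}),
      IsNilpotent n ∧ IsSemisimple s ∧ f = n + s := by
  obtain ⟨g, k, sqf, hdvd, hpow⟩ :=
    exists_squarefree_dvd_pow_of_ne_zero (minpoly.ne_zero_of_finite K f)
  have hg : g.Separable :=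
    sqf.separable_of_forall_irreducible_dvd fun p hp hpg => hsep p hp (hpg.trans hdvd)
  exact exists_isNilpotent_isSemisimple_of_separable_of_dvd_pow hg hpow

end Module.End

/-- If every irreducible factor of the minimal polynomial of `x` is separable, then `x`
admits a Jordan-Chevalley decomposition. -/
theorem exists_jordan_chevalley {K V : Type} [Field K] [AddCommGroup V] [Module K V]
    [FiniteDimensional K V] (x : Module.End K V)
    (hsep : ∀ g : K[X], Irreducible g → g ∣ minpoly K x → g.Separable) :
    ∃ s n : Module.End K V,
      x = s + n ∧ s.IsSemisimple ∧ IsNilpotent n ∧ Commute s n := by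
  obtain ⟨n, hn, s, hs, hnil, hss, hx⟩ :=
    x.exists_isNilpotent_isSemisimple_of_forall_irreducible_dvd_separable hsep
  have hxs : Commute x s := Algebra.commute_of_mem_adjoin_self hs
  exact ⟨s, n, hx.trans (add_comm n s), hss, hnil,
    Algebra.commute_of_mem_adjoin_singleton_of_commute hn hxs.symm⟩
end

section
/- Let K be a field, x : V → V an endomorphism of a finite-dimensional K-vector space, and x = s + n a Jordan-Chevalley decomposition (s semisimple, n nilpotent, s ∘ n = n ∘ s) such that for every field extension M/K the base change id ⊗ s remains semisimple over M. Then every irreducible factor of the minimal polynomial of x is separable. -/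
/-!
Since `n` is nilpotent and commutes with `s`, `(minpoly K s)(x)` is nilpotent, so every irreducible
factor `g` of `minpoly K x` divides `minpoly K s`. Minimal polynomials of endomorphisms of
finite-dimensional spaces are unchanged by base change, because powers of `s` that are linearly
independent over `K` stay so over `M`. Hence `g` divides a polynomial that stays squarefree over an
algebraic closure, so `g` is separable.
-/

open Polynomial TensorProduct

open scoped IsMulCommutative in
theorem Commute.isNilpotent_aeval_add_sub_aeval {R A : Type*} [CommRing R] [Ring A] [Algebra R A]
    (P : R[X]) {a b : A} (hab : Commute a b) (hb : IsNilpotent b) :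
    IsNilpotent (aeval (a + b) P - aeval a P) := by
  let S := Algebra.adjoin R {a, b}
  have : IsMulCommutative S := Algebra.isMulCommutative_adjoin R (by
    simp only [Set.mem_insert_iff, Set.mem_singleton_iff]
    rintro x (rfl | rfl) y (rfl | rfl) <;> first | rfl | exact hab | exact hab.symm)
  let a' : S := ⟨a, Algebra.subset_adjoin (by simp)⟩
  let b' : S := ⟨b, Algebra.subset_adjoin (by simp)⟩
  have hb' : IsNilpotent (a' + b' - a') := by
    rw [add_sub_cancel_left]
    exact (IsNilpotent.map_iff (f := S.val) Subtype.val_injective).mp hb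
  have h := (isNilpotent_aeval_sub_of_isNilpotent_sub P hb').map S.val
  rwa [map_sub, ← aeval_algHom_apply, ← aeval_algHom_apply] at h

theorem minpoly_add_dvd_pow_minpoly {K A : Type*} [Field K] [Ring A] [Algebra K A] {a b : A}
    (hab : Commute a b) (hb : IsNilpotent b) : ∃ k, minpoly K (a + b) ∣ minpoly K a ^ k := by
  obtain ⟨k, hk⟩ := hab.isNilpotent_aeval_add_sub_aeval (minpoly K a) hb
  rw [minpoly.aeval, sub_zero, ← map_pow] at hk
  exact ⟨k, minpoly.dvd K _ hk⟩

theorem LinearIndependent.baseChange {R S V W ι : Type*} [CommRing R] [CommRing S] [Algebra R S]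
    [Module.Flat R S] [AddCommGroup V] [Module R V] [Module.FinitePresentation R V]
    [AddCommGroup W] [Module R W] {f : ι → V →ₗ[R] W} (hf : LinearIndependent R f) :
    LinearIndependent S fun i ↦ (f i).baseChange S := by
  let e := (Module.FinitePresentation.isBaseChange_map R V W S).equiv
  convert (e.toLinearMap.linearIndependent_iff_of_injOn e.injective.injOn).mpr
    (Module.Flat.linearIndependent_one_tmul hf) using 1
  ext i : 1
  simp [e, IsBaseChange.equiv_tmul]

theorem LinearMap.minpoly_baseChange {K M V : Type*} [Field K] [Field M] [Algebra K M] [AddCommGroup V]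
    [Module K V] [FiniteDimensional K V] (f : Module.End K V) :
    minpoly M (f.baseChange M) = (minpoly K f).map (algebraMap K M) := by
  have : Module.FinitePresentation K V := Module.finitePresentation_of_finite K V
  have hf : IsIntegral K f := Algebra.IsIntegral.isIntegral f
  refine minpoly.eq_of_linearIndependent M _ ((minpoly.monic hf).map _) ?_ _
    (by rw [degree_map, degree_eq_natDegree (minpoly.ne_zero hf)]) ?_
  · have h := aeval_algHom_apply (Module.End.baseChangeHom K M V) f (minpoly K f)
    rwa [minpoly.aeval, map_zero, ← aeval_map_algebraMap M] at h
  · simpa [LinearMap.baseChange_pow] using (linearIndependent_pow f).baseChange (S := M)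

theorem Polynomial.separable_of_squarefree_map {K M : Type*} [Field K] [Field M] [PerfectField M]
    [Algebra K M] {g : K[X]} (hg : Squarefree (g.map (algebraMap K M))) : g.Separable :=
  (separable_map (algebraMap K M)).mp (PerfectField.separable_iff_squarefree.mpr hg)

theorem separable_of_geometrically_semisimple_general {K V : Type} [Field K] [AddCommGroup V]
    [Module K V] [FiniteDimensional K V] (x s n : Module.End K V)
    (hx : x = s + n) (hn : IsNilpotent n)
    (hc : Commute s n)
    (hbase : ∀ (M : Type) [Field M] [Algebra K M],
      Squarefree (minpoly M (LinearMap.baseChange M s : Module.End M (M ⊗[K] V)))) :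
    ∀ g : K[X], Irreducible g → g ∣ minpoly K x → g.Separable := by
  intro g hg hgx
  obtain ⟨k, hk⟩ := minpoly_add_dvd_pow_minpoly (K := K) hc hn
  rw [← hx] at hk
  have hgs : g ∣ minpoly K s := hg.prime.dvd_of_dvd_pow (hgx.trans hk)
  have hsq := hbase (AlgebraicClosure K)
  rw [LinearMap.minpoly_baseChange] at hsq
  exact separable_of_squarefree_map <|
    hsq.squarefree_of_dvd (map_dvd (algebraMap K (AlgebraicClosure K)) hgs)

/-- If `x = s + n` is a Jordan-Chevalley decomposition such that `s` stays semisimple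
(square-free minimal polynomial) after base change to every field extension `M/K`, then
every irreducible factor of the minimal polynomial of `x` is separable. -/
theorem separable_of_geometrically_semisimple {K V : Type} [Field K] [AddCommGroup V]
    [Module K V] [FiniteDimensional K V] (x s n : Module.End K V)
    (hx : x = s + n) (hs : Squarefree (minpoly K s)) (hn : IsNilpotent n)
    (hc : Commute s n)
    (hbase : ∀ (M : Type) [Field M] [Algebra K M],
      Squarefree (minpoly M (LinearMap.baseChange M s : Module.End M (M ⊗[K] V)))) :
    ∀ g : K[X], Irreducible g → g ∣ minpoly K x → g.Separable :=
  separable_of_geometrically_semisimple_general x s n hx hn hc hbase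
end

section
/- Let K be a field, f ∈ K[T] monic irreducible, and x : V → V an f-primary endomorphism of a finite-dimensional K-vector space (i.e. the minimal polynomial of x is a power of f). If x = s + n is a Jordan-Chevalley decomposition of x (s semisimple, n nilpotent, commuting), then the minimal polynomial of s equals f. -/
open Polynomial

/-!
Since `s` and `n` commute, `f(s) - f(x)` is divisible by `s - x = -n` in a commutative
subalgebra, so it is nilpotent, and `f(s)` is nilpotent together with `f(x)`. Thus the minimal
polynomial of `s` divides a power of `f`; being squarefree it divides `f` itself, so `f(s) = 0`,
and irreducibility of `f` forces `minpoly s = f`.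
-/

open scoped IsMulCommutative in
theorem Commute.isNilpotent_aeval_of_isNilpotent_sub {R A : Type*} [CommRing R] [Ring A]
    [Algebra R A] (P : R[X]) {a b : A} (hab : Commute a b)
    (h : IsNilpotent (a - b)) (ha : IsNilpotent (aeval a P)) : IsNilpotent (aeval b P) := by
  let S := Algebra.adjoin R {a, b}
  have : IsMulCommutative S := by
    refine Algebra.isMulCommutative_adjoin R ?_
    rintro _ (rfl | rfl) _ (rfl | rfl)
    exacts [rfl, hab.eq, hab.eq.symm, rfl]
  have hnil (c : S) : IsNilpotent c ↔ IsNilpotent (c : A) :=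
    (IsNilpotent.map_iff (f := S.val) Subtype.val_injective).symm
  let a' : S := ⟨a, Algebra.subset_adjoin (by simp)⟩
  let b' : S := ⟨b, Algebra.subset_adjoin (by simp)⟩
  have ha' : IsNilpotent (aeval a' P) := by rwa [hnil, aeval_subalgebra_coe]
  have hab' : IsNilpotent (a' - b') := (hnil _).mpr h
  have hb' : IsNilpotent (aeval b' P) := by
    simpa using (Commute.all _ _).isNilpotent_sub ha'
      (Polynomial.isNilpotent_aeval_sub_of_isNilpotent_sub P hab')
  rwa [hnil, aeval_subalgebra_coe] at hb'

theorem minpoly_eq_of_squarefree_of_isNilpotent_aeval {K A : Type*} [Field K] [Ring A]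
    [Algebra K A] [Nontrivial A] {f : K[X]} (hf : f.Monic) (hirr : Irreducible f) {a : A}
    (ha : Squarefree (minpoly K a)) (hnil : IsNilpotent (aeval a f)) : minpoly K a = f := by
  obtain ⟨m, hm⟩ := hnil
  have hdvd : minpoly K a ∣ f ^ m := minpoly.dvd K a (by rw [map_pow, hm])
  exact (minpoly.eq_of_irreducible_of_monic hirr
    (minpoly.dvd_iff.mp (ha.isRadical m f hdvd)) hf).symm

theorem minpoly_semisimple_part_eq_general {K V : Type} [Field K] [AddCommGroup V] [Module K V]
    [Nontrivial V] (f : K[X]) (hf : f.Monic) (hirr : Irreducible f)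
    (x s n : Module.End K V) (k : ℕ) (hprim : minpoly K x = f ^ k)
    (hx : x = s + n) (hs : Squarefree (minpoly K s)) (hn : IsNilpotent n)
    (hc : Commute s n) :
    minpoly K s = f := by
  have hfx : IsNilpotent (aeval x f) := ⟨k, by rw [← map_pow, ← hprim, minpoly.aeval]⟩
  have hxs : Commute x s := hx ▸ (Commute.refl s).add_left hc.symm
  have hsub : IsNilpotent (x - s) := by rwa [hx, add_sub_cancel_left]
  exact minpoly_eq_of_squarefree_of_isNilpotent_aeval hf hirr hs
    (hxs.isNilpotent_aeval_of_isNilpotent_sub f hsub hfx)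

/-- If `x` is `f`-primary (its minimal polynomial is a positive power of the monic
irreducible polynomial `f`) and `x = s + n` is a Jordan-Chevalley decomposition,
then the minimal polynomial of `s` equals `f`. -/
theorem minpoly_semisimple_part_eq {K V : Type} [Field K] [AddCommGroup V] [Module K V]
    [FiniteDimensional K V] [Nontrivial V] (f : K[X]) (hf : f.Monic) (hirr : Irreducible f)
    (x s n : Module.End K V) (k : ℕ) (hk : 1 ≤ k) (hprim : minpoly K x = f ^ k)
    (hx : x = s + n) (hs : Squarefree (minpoly K s)) (hn : IsNilpotent n)
    (hc : Commute s n) :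
    minpoly K s = f :=
  minpoly_semisimple_part_eq_general f hf hirr x s n k hprim hx hs hn hc
end

section
/- Let K be a field, x : V → V an endomorphism of a finite-dimensional K-vector space, and g ∈ K[T] a polynomial with g(x) = 0. If x = s + n with s, n commuting and n nilpotent, then g(s) is a multiple of n in the commutative subring K[s,n] of End(V); in particular g(s) is nilpotent. -/
open Polynomial

open scoped IsMulCommutative in
theorem Polynomial.exists_mem_adjoin_aeval_add_eq_add_mul {R A : Type*} [CommRing R] [Ring A]
    [Algebra R A] {a b : A} (hab : Commute a b) (p : R[X]) :
    ∃ c ∈ Algebra.adjoin R {a, b}, aeval (a + b) p = aeval a p + c * b := by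
  let S := Algebra.adjoin R ({a, b} : Set A)
  have : IsMulCommutative S := Algebra.isMulCommutative_adjoin R <| by
    rintro x (rfl | rfl) y (rfl | rfl)
    exacts [rfl, hab.eq, hab.eq.symm, rfl]
  let a' : S := ⟨a, Algebra.subset_adjoin (by simp)⟩
  let b' : S := ⟨b, Algebra.subset_adjoin (by simp)⟩
  -- `S` is commutative, so `(a + b) - a` divides `p(a + b) - p(a)` there.
  obtain ⟨c, hc⟩ := sub_dvd_eval_sub (a' + b') a' (p.map (algebraMap R S))
  simp only [eval_map_algebraMap, add_sub_cancel_left] at hc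
  refine ⟨c, c.2, ?_⟩
  have key : aeval (a' + b') p = aeval a' p + c * b' := by
    rw [mul_comm, ← hc, add_sub_cancel]
  simpa [a', b'] using congrArg Subtype.val key

theorem aeval_semisimple_part_multiple_of_nilpotent_general {K V : Type} [Field K] [AddCommGroup V]
    [Module K V] (x s n : Module.End K V) (g : K[X])
    (hg : Polynomial.aeval x g = 0) (hx : x = s + n) (hc : Commute s n)
    (hn : IsNilpotent n) :
    (∃ c ∈ Algebra.adjoin K {s, n}, Polynomial.aeval s g = c * n) ∧
      IsNilpotent (Polynomial.aeval s g) := by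
  obtain ⟨c, hc_mem, hc_eq⟩ := exists_mem_adjoin_aeval_add_eq_add_mul hc g
  have hgs : aeval s g = -c * n := by
    rw [neg_mul, eq_neg_iff_add_eq_zero, ← hc_eq, ← hx, hg]
  have hcn : Commute (-c) n :=
    (Algebra.commute_of_mem_adjoin_of_forall_mem_commute (neg_mem hc_mem) <| by
      rintro y (rfl | rfl)
      exacts [hc.symm, Commute.refl _]).symm
  exact ⟨⟨-c, neg_mem hc_mem, hgs⟩, hgs ▸ hcn.isNilpotent_mul_left hn⟩

/-- If `g` annihilates `x = s + n` with `s, n` commuting and `n` nilpotent, then `g(s)`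
is a multiple of `n` in the commutative subring `K[s,n]` of `End_K(V)`; in particular
`g(s)` is nilpotent. -/
theorem aeval_semisimple_part_multiple_of_nilpotent {K V : Type} [Field K] [AddCommGroup V]
    [Module K V] [FiniteDimensional K V] (x s n : Module.End K V) (g : K[X])
    (hg : Polynomial.aeval x g = 0) (hx : x = s + n) (hc : Commute s n)
    (hn : IsNilpotent n) :
    (∃ c ∈ Algebra.adjoin K {s, n}, Polynomial.aeval s g = c * n) ∧
      IsNilpotent (Polynomial.aeval s g) :=
  aeval_semisimple_part_multiple_of_nilpotent_general x s n g hg hx hc hn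
end

section
/- Let K be a field and f ∈ K[T] a monic irreducible inseparable polynomial (so that its formal derivative f' is zero). Let C_f be the companion matrix of f and E any nonzero matrix of size deg f commuting with C_f. Then the block matrix M = [[C_f, E],[0, C_f]] satisfies f(M) = 0; hence its minimal polynomial is f and M is semisimple. -/
/-!
Write `M = D + N` with `D = diag(C_f, C_f)` and `N = [[0, E], [0, 0]]`. Since `N² = 0` and `N`
commutes with `D`, Taylor expansion gives `f(M) = f(D) + f'(D) N`. Here `f(D) = 0` because `C_f`
is the matrix of multiplication by the root of `f` on `K[T]/(f)`, and `f' = 0`; so `f(M) = 0`, and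
irreducibility makes `f` the minimal polynomial, which is square-free.
-/

open Polynomial

/-- The companion matrix of a monic polynomial `f`: it represents multiplication by `T`
on `K[T]/(f)` with respect to the standard basis. -/
def companionMatrix {K : Type} [Field K] (f : K[X]) :
    Matrix (Fin f.natDegree) (Fin f.natDegree) K :=
  fun i j => if (i : ℕ) = (j : ℕ) + 1 then 1
    else if (j : ℕ) = f.natDegree - 1 then -f.coeff i else 0

open scoped IsMulCommutative in
theorem Polynomial.aeval_add_of_sq_eq_zero_of_commute {R A : Type*} [CommRing R] [Ring A]
    [Algebra R A] (p : R[X]) {x y : A} (hxy : Commute x y) (hy : y ^ 2 = 0) :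
    p.aeval (x + y) = p.aeval x + p.derivative.aeval x * y := by
  let S := Algebra.adjoin R {x, y}
  have : IsMulCommutative S := Algebra.isMulCommutative_adjoin R (by
    simp only [Set.mem_insert_iff, Set.mem_singleton_iff]
    rintro a (rfl | rfl) b (rfl | rfl) <;> first | rfl | exact hxy | exact hxy.symm)
  let x' : S := ⟨x, Algebra.subset_adjoin (by simp)⟩
  let y' : S := ⟨y, Algebra.subset_adjoin (by simp)⟩
  have hy' : y' ^ 2 = 0 := Subtype.ext hy
  have := congrArg S.val (p.aeval_add_of_sq_eq_zero x' y' hy')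
  simp only [map_add, map_mul, ← Polynomial.aeval_algHom_apply] at this
  exact this

theorem Matrix.aeval_fromBlocks_diagonal {R n m : Type*} [CommRing R] [Fintype n] [Fintype m]
    [DecidableEq n] [DecidableEq m] (A : Matrix n n R) (D : Matrix m m R) (p : R[X]) :
    p.aeval (fromBlocks A 0 0 D) = fromBlocks (p.aeval A) 0 0 (p.aeval D) := by
  induction p using Polynomial.induction_on' with
  | add p q hp hq => simp only [map_add, hp, hq, fromBlocks_add, add_zero]
  | monomial k a =>
    simp only [aeval_monomial, fromBlocks_diagonal_pow, Algebra.algebraMap_eq_smul_one,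
      smul_mul_assoc, one_mul, fromBlocks_smul, smul_zero]

theorem Matrix.aeval_fromBlocks_of_commute {R n : Type*} [CommRing R] [Fintype n]
    [DecidableEq n] {A E : Matrix n n R} (h : Commute A E) (p : R[X]) :
    p.aeval (fromBlocks A E 0 A) =
      fromBlocks (p.aeval A) (p.derivative.aeval A * E) 0 (p.aeval A) := by
  have hsplit : fromBlocks A E 0 A = fromBlocks A 0 0 A + fromBlocks 0 E 0 0 := by
    simp [fromBlocks_add]
  have hsq : (fromBlocks 0 E 0 0 : Matrix (n ⊕ n) (n ⊕ n) R) ^ 2 = 0 := by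
    simp [sq, fromBlocks_multiply]
  have hcomm : Commute (fromBlocks A 0 0 A) (fromBlocks 0 E 0 0) := by
    simp [Commute, SemiconjBy, fromBlocks_multiply, h.eq]
  rw [hsplit, p.aeval_add_of_sq_eq_zero_of_commute hcomm hsq, aeval_fromBlocks_diagonal,
    aeval_fromBlocks_diagonal, fromBlocks_multiply, fromBlocks_add]
  simp

theorem Polynomial.Monic.X_pow_natDegree_modByMonic {R : Type*} [CommRing R] {f : R[X]}
    (hf : f.Monic) : X ^ f.natDegree %ₘ f = X ^ f.natDegree - f := by
  nontriviality R
  rw [modByMonic_eq_of_dvd_sub hf (by rw [sub_sub_cancel]), (modByMonic_eq_self_iff hf).mpr]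
  exact degree_sub_lt_right (by rw [degree_X_pow, degree_eq_natDegree hf.ne_zero]) hf.ne_zero
    (by rw [leadingCoeff_X_pow, hf.leadingCoeff])

theorem leftMulMatrix_root_eq_companionMatrix {K : Type} [Field K] {f : K[X]} (hf : f.Monic) :
    Algebra.leftMulMatrix (AdjoinRoot.powerBasisAux' hf) (AdjoinRoot.root f) =
      companionMatrix f := by
  ext i j
  have hbasis : AdjoinRoot.powerBasisAux' hf j = AdjoinRoot.root f ^ (j : ℕ) :=
    (AdjoinRoot.powerBasis' hf).basis_eq_pow j
  rw [Algebra.leftMulMatrix_eq_repr_mul, AdjoinRoot.powerBasisAux'_repr_apply_to_fun, hbasis,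
    ← pow_succ', ← AdjoinRoot.mk_X, ← map_pow, AdjoinRoot.modByMonicHom_mk, companionMatrix]
  rcases Nat.lt_or_ge ((j : ℕ) + 1) f.natDegree with hj | hj
  · rw [(modByMonic_eq_self_iff hf).mpr
      (by rwa [degree_X_pow, degree_eq_natDegree hf.ne_zero, Nat.cast_lt]), coeff_X_pow]
    simp [show (j : ℕ) ≠ f.natDegree - 1 by omega]
  · have hj' : (j : ℕ) + 1 = f.natDegree := by omega
    rw [hj', hf.X_pow_natDegree_modByMonic, coeff_sub, coeff_X_pow]
    simp [i.isLt.ne, show (j : ℕ) = f.natDegree - 1 by omega]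

theorem aeval_companionMatrix_self {K : Type} [Field K] {f : K[X]} (hf : f.Monic) :
    f.aeval (companionMatrix f) = 0 := by
  rw [← leftMulMatrix_root_eq_companionMatrix hf, aeval_algHom_apply, AdjoinRoot.aeval_eq,
    AdjoinRoot.mk_self, map_zero]

theorem block_matrix_semisimple_general {K : Type} [Field K] (f : K[X]) (hf : f.Monic)
    (hirr : Irreducible f) (hder : derivative f = 0)
    (E : Matrix (Fin f.natDegree) (Fin f.natDegree) K)
    (hcomm : E * companionMatrix f = companionMatrix f * E) :
    Polynomial.aeval (Matrix.fromBlocks (companionMatrix f) E 0 (companionMatrix f)) f = 0 ∧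
    minpoly K (Matrix.fromBlocks (companionMatrix f) E 0 (companionMatrix f)) = f ∧
    Squarefree (minpoly K (Matrix.fromBlocks (companionMatrix f) E 0 (companionMatrix f))) := by
  have hroot : f.aeval (Matrix.fromBlocks (companionMatrix f) E 0 (companionMatrix f)) = 0 := by
    rw [Matrix.aeval_fromBlocks_of_commute hcomm.symm, hder, map_zero, zero_mul,
      aeval_companionMatrix_self hf, Matrix.fromBlocks_zero]
  have : Nonempty (Fin f.natDegree) := ⟨⟨0, hirr.natDegree_pos⟩⟩
  have hmin := (minpoly.eq_of_irreducible_of_monic hirr hroot hf).symm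
  exact ⟨hroot, hmin, hmin.symm ▸ hirr.squarefree⟩

/-- If `f` is monic irreducible with vanishing formal derivative, `C_f` its companion
matrix and `E ≠ 0` commutes with `C_f`, then the block matrix `M = [[C_f, E], [0, C_f]]`
satisfies `f(M) = 0`; hence its minimal polynomial is `f` and `M` is semisimple
(square-free minimal polynomial). -/
theorem block_matrix_semisimple {K : Type} [Field K] (f : K[X]) (hf : f.Monic)
    (hirr : Irreducible f) (hder : derivative f = 0)
    (E : Matrix (Fin f.natDegree) (Fin f.natDegree) K) (hE : E ≠ 0)
    (hcomm : E * companionMatrix f = companionMatrix f * E) :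
    Polynomial.aeval (Matrix.fromBlocks (companionMatrix f) E 0 (companionMatrix f)) f = 0 ∧
    minpoly K (Matrix.fromBlocks (companionMatrix f) E 0 (companionMatrix f)) = f ∧
    Squarefree (minpoly K (Matrix.fromBlocks (companionMatrix f) E 0 (companionMatrix f))) :=
  block_matrix_semisimple_general f hf hirr hder E hcomm
end

section
/- Let K be a field, f ∈ K[T] monic irreducible with f' = 0, and C_{f²} the companion matrix of f². Then C_{f²} admits no Jordan-Chevalley decomposition: there are no commuting matrices S, N over K with C_{f²} = S + N, N nilpotent, and S having square-free minimal polynomial. -/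
/-!
Realise `C_{f²}` as multiplication by `x = root (f²)` on `A = K[X]/(f²)` in the power basis.
Since `x` generates `A`, every matrix commuting with `C_{f²}` is multiplication by an element
of `A`, so a decomposition would give `x = s + n` in `A` with `n` nilpotent. Every nilpotent
of `A` is a multiple of `f(x)`, hence squares to zero, and then Taylor expansion with `f' = 0`
gives `f(s) = f(x)`. Thus `f(s)² = 0`, and the squarefree `minpoly s` divides `f`, so
`f(x) = f(s) = 0`, i.e. `f² ∣ f`, which is absurd.
-/

open Polynomial

theorem companionMatrix_eq_leftMulMatrix_root {K : Type} [Field K] {g : K[X]} (hg : g.Monic) :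
    companionMatrix g =
      Algebra.leftMulMatrix (AdjoinRoot.powerBasis hg.ne_zero).basis (AdjoinRoot.root g) := by
  have hpb := (AdjoinRoot.powerBasis hg.ne_zero).leftMulMatrix
  rw [PowerBasis.minpolyGen_eq, AdjoinRoot.minpoly_powerBasis_gen_of_monic hg] at hpb
  rw [← AdjoinRoot.powerBasis_gen hg.ne_zero, hpb]
  ext i j
  change companionMatrix g i j =
    if (j : ℕ) + 1 = g.natDegree then -g.coeff i else if (i : ℕ) = j + 1 then 1 else 0
  unfold companionMatrix
  split_ifs <;> first | rfl | omega

namespace PowerBasis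

variable {R S : Type*} [CommRing R] [CommRing S] [Algebra R S]

theorem eq_lmul_of_commute (pb : PowerBasis R S) {φ : Module.End R S}
    (h : Commute φ (Algebra.lmul R S pb.gen)) : φ = Algebra.lmul R S (φ 1) := by
  have hpow : ∀ k : ℕ, φ (pb.gen ^ k) = pb.gen ^ k * φ 1 := by
    intro k
    induction k with
    | zero => simp
    | succ k ih => rw [pow_succ', mul_assoc, ← ih]; exact LinearMap.congr_fun h (pb.gen ^ k)
  refine pb.basis.ext fun i => ?_
  rw [pb.basis_eq_pow, hpow]
  exact mul_comm _ _

theorem exists_leftMulMatrix_eq_of_commute (pb : PowerBasis R S)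
    {M : Matrix (Fin pb.dim) (Fin pb.dim) R}
    (hM : Commute M (Algebra.leftMulMatrix pb.basis pb.gen)) :
    ∃ a, Algebra.leftMulMatrix pb.basis a = M := by
  set e := LinearMap.toMatrixAlgEquiv (R := R) pb.basis
  have he : ∀ a, e (Algebra.lmul R S a) = Algebra.leftMulMatrix pb.basis a := fun _ => rfl
  have hφ := hM.map e.symm
  rw [← he, e.symm_apply_apply] at hφ
  exact ⟨e.symm M 1, by rw [← he, ← pb.eq_lmul_of_commute hφ, e.apply_symm_apply]⟩

end PowerBasis

namespace AdjoinRoot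

theorem sq_eq_zero_of_isNilpotent {R : Type*} [CommRing R] {f : R[X]} (hf : Prime f)
    {a : AdjoinRoot (f ^ 2)} (ha : IsNilpotent a) : a ^ 2 = 0 := by
  obtain ⟨p, rfl⟩ := mk_surjective a
  obtain ⟨k, hk⟩ := ha
  rw [← map_pow, mk_eq_zero] at hk ⊢
  exact pow_dvd_pow_of_dvd (hf.dvd_of_dvd_pow ((dvd_pow_self f two_ne_zero).trans hk)) 2

theorem root_ne_add_of_isNilpotent {K : Type} [Field K] {f : K[X]} (hirr : Irreducible f)
    (hder : derivative f = 0) {s n : AdjoinRoot (f ^ 2)} (hn : IsNilpotent n)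
    (hs : Squarefree (minpoly K s)) : root (f ^ 2) ≠ s + n := by
  intro hsn
  have hfs : aeval s f = mk (f ^ 2) f := by
    rw [← aeval_eq, hsn, aeval_add_of_sq_eq_zero _ _ _ (sq_eq_zero_of_isNilpotent hirr.prime hn),
      hder, map_zero, zero_mul, add_zero]
  have hfs_sq : aeval s (f ^ 2) = 0 := by rw [map_pow, hfs, ← map_pow, mk_self]
  have hfs_zero : aeval s f = 0 :=
    minpoly.dvd_iff.mp ((hs.dvd_pow_iff_dvd two_ne_zero).mp (minpoly.dvd K s hfs_sq))
  rw [hfs_zero, eq_comm, mk_eq_zero, sq] at hfs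
  exact hirr.not_isUnit (isUnit_of_dvd_one
    ((mul_dvd_mul_iff_left hirr.ne_zero).mp (by rwa [mul_one])))

end AdjoinRoot

/-- If `f` is monic irreducible and inseparable (`f' = 0`), then the companion matrix of
`f²` admits no Jordan-Chevalley decomposition. -/
theorem companion_sq_no_jordan_chevalley {K : Type} [Field K] (f : K[X]) (hf : f.Monic)
    (hirr : Irreducible f) (hder : derivative f = 0) :
    ¬ ∃ S N : Matrix (Fin (f ^ 2).natDegree) (Fin (f ^ 2).natDegree) K,
        companionMatrix (f ^ 2) = S + N ∧ S * N = N * S ∧ IsNilpotent N ∧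
        Squarefree (minpoly K S) := by
  rintro ⟨S, N, hSN, hcomm, hnil, hsq⟩
  set pb := AdjoinRoot.powerBasis (hf.pow 2).ne_zero
  have hC : Algebra.leftMulMatrix pb.basis pb.gen = S + N :=
    (companionMatrix_eq_leftMulMatrix_root (hf.pow 2)).symm.trans hSN
  obtain ⟨s, rfl⟩ := pb.exists_leftMulMatrix_eq_of_commute (M := S)
    (hC ▸ (Commute.refl S).add_right hcomm)
  obtain ⟨n, rfl⟩ := pb.exists_leftMulMatrix_eq_of_commute (M := N)
    (hC ▸ (Commute.symm hcomm).add_right (Commute.refl N))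
  have hinj := Algebra.leftMulMatrix_injective pb.basis
  exact AdjoinRoot.root_ne_add_of_isNilpotent hirr hder ((IsNilpotent.map_iff hinj).mp hnil)
    (minpoly.algHom_eq _ hinj s ▸ hsq) (hinj (by rw [map_add]; exact hC))
end

section
/- Let K be a field, f ∈ K[T] monic irreducible of inseparability degree q, L = K[S]/f(S), and write f = (T − S)^q · g in L[T] with g(S) ≠ 0. For a ≥ 1 set V = L[U]/(U^a) with x acting as multiplication by S + U. Then for every i ≥ 0, dim_L ker f(x)^i = min(iq, a). -/
/-!
Over `V = L[U]/(U^a)` we have `f(S + U) = U^q g(S + U)`, and `g(S + U)` is the unit `g(S)` plus a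
nilpotent, so `ker f(x)^i = ker U^(iq)`. For `m ≤ a`, `U^a ∣ U^m p` iff `U^(a-m) ∣ p`, so the
kernel of `U^m` is the isomorphic image of the polynomials of degree `< m` under
`p ↦ U^(a-m) p`; it has dimension `m`.
-/

open Polynomial

theorem Polynomial.aeval_mulLeft {R A : Type*} [CommSemiring R] [Semiring A] [Algebra R A]
    (w : A) (p : R[X]) :
    aeval (LinearMap.mulLeft R w) p = LinearMap.mulLeft R (aeval w p) :=
  aeval_algHom_apply (Algebra.lmul R A) w p

theorem LinearMap.ker_mulLeft_mul_of_isUnit {R A : Type*} [CommSemiring R] [Semiring A]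
    [Algebra R A] {c : A} (hc : IsUnit c) (a : A) :
    ker (mulLeft R (c * a)) = ker (mulLeft R a) := by
  rw [mulLeft_mul, ker_comp_of_ker_eq_bot]
  exact ker_eq_bot_of_injective hc.isRegular.left

namespace AdjoinRoot

theorem root_X_pow_pow_self {R : Type*} [CommRing R] (a : ℕ) : root (X ^ a : R[X]) ^ a = 0 := by
  rw [← mk_X, ← map_pow, mk_self]

theorem mk_X_pow_mul_eq_zero_iff {R : Type*} [CommRing R] [IsDomain R] {a m : ℕ} (hm : m ≤ a)
    {p : R[X]} : mk (X ^ a) (X ^ m * p) = 0 ↔ X ^ (a - m) ∣ p := by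
  rw [mk_eq_zero, ← Nat.add_sub_cancel' hm, pow_add, Nat.add_sub_cancel_left,
    mul_dvd_mul_iff_left (pow_ne_zero _ X_ne_zero)]

variable {L : Type*} [Field L] {a m : ℕ}

variable (L a m) in
noncomputable def shiftDegreeLT : L[X]_m →ₗ[L] AdjoinRoot (X ^ a : L[X]) :=
  (mkₐ (X ^ a)).toLinearMap ∘ₗ LinearMap.mulLeft L (X ^ (a - m)) ∘ₗ (L[X]_m).subtype

theorem shiftDegreeLT_injective (hm : m ≤ a) : Function.Injective (shiftDegreeLT L a m) := by
  refine (injective_iff_map_eq_zero _).2 fun ⟨p, hp⟩ hp0 => ?_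
  have hdvd : X ^ m ∣ p := by
    simpa only [Nat.sub_sub_self hm] using
      (mk_X_pow_mul_eq_zero_iff (Nat.sub_le a m) (p := p)).1 hp0
  exact Subtype.ext (eq_zero_of_dvd_of_degree_lt hdvd (by rwa [degree_X_pow, ← mem_degreeLT]))

theorem range_shiftDegreeLT (hm : m ≤ a) :
    LinearMap.range (shiftDegreeLT L a m) =
      LinearMap.ker (LinearMap.mulLeft L (root (X ^ a : L[X]) ^ m)) := by
  ext v
  obtain ⟨p, rfl⟩ := mk_surjective v
  rw [LinearMap.mem_ker, LinearMap.mulLeft_apply, ← mk_X, ← map_pow, ← map_mul]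
  constructor
  · rintro ⟨r, hr⟩
    rw [map_mul, ← hr]
    change mk _ (X ^ m) * mk _ (X ^ (a - m) * (r : L[X])) = 0
    rw [← map_mul, ← mul_assoc, ← pow_add, Nat.add_sub_cancel' hm, mk_eq_zero]
    exact dvd_mul_right _ _
  · rw [mk_X_pow_mul_eq_zero_iff hm]
    rintro ⟨r, rfl⟩
    refine ⟨⟨r %ₘ X ^ m, mem_degreeLT.2 ((degree_modByMonic_lt _ (monic_X_pow m)).trans_eq
      (degree_X_pow m))⟩, ?_⟩
    change mk _ (X ^ (a - m) * (r %ₘ X ^ m)) = mk _ (X ^ (a - m) * r)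
    conv_rhs => rw [← modByMonic_add_div r (X ^ m)]
    rw [mul_add, map_add, ← mul_assoc, ← pow_add, Nat.sub_add_cancel hm,
      mk_eq_zero.2 (dvd_mul_right (X ^ a) _), add_zero]

theorem finrank_ker_mulLeft_root_pow :
    Module.finrank L (LinearMap.ker (LinearMap.mulLeft L (root (X ^ a : L[X]) ^ m))) =
      min m a := by
  rcases le_total m a with hm | ham
  · rw [← range_shiftDegreeLT hm, LinearMap.finrank_range_of_inj (shiftDegreeLT_injective hm),
      Module.finrank_eq_card_basis (degreeLT.basis L m), Fintype.card_fin, min_eq_left hm]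
  · rw [pow_eq_zero_of_le ham (root_X_pow_pow_self a), LinearMap.mulLeft_zero_eq_zero, LinearMap.ker_zero, finrank_top,
      (powerBasis' (monic_X_pow a)).finrank, powerBasis'_dim, natDegree_X_pow, min_eq_right ham]

end AdjoinRoot

theorem finrank_ker_aeval_pow_general {K : Type} [Field K] (f : K[X])
    [Fact (Irreducible f)] (q : ℕ) (g : Polynomial (AdjoinRoot f))
    (hfac : f.map (algebraMap K (AdjoinRoot f)) =
      (X - C (AdjoinRoot.root f)) ^ q * g)
    (hg : Polynomial.eval (AdjoinRoot.root f) g ≠ 0)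
    (a : ℕ) :
    ∀ i : ℕ,
      Module.finrank (AdjoinRoot f)
        (LinearMap.ker ((Polynomial.aeval
          (LinearMap.mulLeft (AdjoinRoot f)
            (algebraMap (AdjoinRoot f) (AdjoinRoot (X ^ a : Polynomial (AdjoinRoot f)))
              (AdjoinRoot.root f) +
             AdjoinRoot.root (X ^ a : Polynomial (AdjoinRoot f))))
          (f.map (algebraMap K (AdjoinRoot f)))) ^ i)) = min (i * q) a := by
  intro i
  set s := algebraMap (AdjoinRoot f) (AdjoinRoot (X ^ a : Polynomial (AdjoinRoot f)))
    (AdjoinRoot.root f)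
  set u := AdjoinRoot.root (X ^ a : Polynomial (AdjoinRoot f))
  have hunit : IsUnit (aeval (s + u) g) := by
    refine isUnit_aeval_of_isUnit_aeval_of_isNilpotent_sub (b := s) ?_ ?_
    · rw [aeval_algebraMap_apply_eq_algebraMap_eval]
      exact (isUnit_iff_ne_zero.2 hg).map _
    · rw [add_sub_cancel_left]
      exact ⟨a, AdjoinRoot.root_X_pow_pow_self a⟩
  rw [aeval_mulLeft, hfac, map_mul, map_pow, map_sub, aeval_X, aeval_C, add_sub_cancel_left,
    LinearMap.pow_mulLeft, mul_comm, mul_pow, LinearMap.ker_mulLeft_mul_of_isUnit (hunit.pow i),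
    ← pow_mul, mul_comm q i]
  exact AdjoinRoot.finrank_ker_mulLeft_root_pow

/-- Let `f ∈ K[T]` be monic irreducible of inseparability degree `q`, i.e.
`f = (T - S)^q · g` over `L = K[S]/(f)` with `g(S) ≠ 0`.  For `a ≥ 1` let
`x` be multiplication by `S + U` on `V = L[U]/(U^a)`.  Then
`dim_L ker f(x)^i = min (i·q) a` for all `i`. -/
theorem finrank_ker_aeval_pow {K : Type} [Field K] (f : K[X]) (hf : f.Monic)
    [Fact (Irreducible f)] (q : ℕ) (g : Polynomial (AdjoinRoot f))
    (hfac : f.map (algebraMap K (AdjoinRoot f)) =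
      (X - C (AdjoinRoot.root f)) ^ q * g)
    (hg : Polynomial.eval (AdjoinRoot.root f) g ≠ 0)
    (a : ℕ) (ha : 1 ≤ a) :
    ∀ i : ℕ,
      Module.finrank (AdjoinRoot f)
        (LinearMap.ker ((Polynomial.aeval
          (LinearMap.mulLeft (AdjoinRoot f)
            (algebraMap (AdjoinRoot f) (AdjoinRoot (X ^ a : Polynomial (AdjoinRoot f)))
              (AdjoinRoot.root f) +
             AdjoinRoot.root (X ^ a : Polynomial (AdjoinRoot f))))
          (f.map (algebraMap K (AdjoinRoot f)))) ^ i)) = min (i * q) a :=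
  finrank_ker_aeval_pow_general f q g hfac hg a
end

section
/- Let q ≥ 1 and let ζ_q : Part → Part be the monoid homomorphism on the monoid of partitions (under splicing/union) determined on singleton partitions by [a] ↦ l·[k+1] + (q−l)·[k], where a = kq + l with 0 ≤ l < q. Then a partition ψ lies in the image of ζ_q if and only if ψ_{(i−1)q+1} ≤ 1 + ψ_{iq} for all i ≥ 1. -/
/- We model partitions as multisets of positive integers; splicing is multiset sum,
making this the free commutative monoid on the singleton partitions. -/

/-- The `i`-th entry (1-indexed) of a partition, listed in decreasing order, with
value `0` beyond the length of the partition. -/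
def Multiset.nthPart (ψ : Multiset ℕ+) (i : ℕ) : ℕ :=
  (((ψ.map ((↑·) : ℕ+ → ℕ)).sort (· ≤ ·)).reverse).getD (i - 1) 0

/-- The image of the singleton partition `[a]` under `ζ_q`: writing `a = k·q + l` with
`0 ≤ l < q`, it consists of `l` copies of `k + 1` and `q - l` copies of `k`
(copies of `0` being discarded). -/
def zetaPiece (q : ℕ) (a : ℕ+) : Multiset ℕ+ :=
  Multiset.replicate ((a : ℕ) % q) ⟨(a : ℕ) / q + 1, Nat.succ_pos _⟩ +
    if h : 0 < (a : ℕ) / q then Multiset.replicate (q - (a : ℕ) % q) ⟨(a : ℕ) / q, h⟩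
    else 0

/-- The monoid homomorphism `ζ_q : Part → Part`, determined on singleton partitions by
`[a] ↦ l·[k+1] + (q-l)·[k]` where `a = k·q + l`, `0 ≤ l < q`. -/
def zetaPart (q : ℕ) (ψ : Multiset ℕ+) : Multiset ℕ+ := ψ.bind (zetaPiece q)

/-- The standard preimage sequence: `φ_i = ψ_{(i-1)q+1} + ⋯ + ψ_{iq}`. -/
def stdPreimageFun (q : ℕ) (ψ : Multiset ℕ+) (i : ℕ) : ℕ :=
  ∑ j ∈ Finset.Icc ((i - 1) * q + 1) (i * q), ψ.nthPart j

/- The proof works with the conjugate partition `ψ'_m = #{j | m ≤ ψ_j}`, which determines `ψ`.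
The piece `ζ_q [a]` has exactly `min q (a - (m-1)q)` parts `≥ m`, so for `ψ = ζ_q φ` the count
`ψ'_m` is additive in `φ`, and `ψ'_m ≤ q · #{a ∈ φ | a > (m-1)q} ≤ ψ'_{m-1}`. Hence
`ψ'_{m-1} ≥ q ⌈ψ'_m / q⌉`, which is the block condition in conjugate form.
Conversely, under the condition the block `ψ_{(i-1)q+1}, …, ψ_{iq}` takes only two adjacent
values, so its sum `φ_i` satisfies `min q (φ_i - (m-1)q) = #{j in block i | m ≤ ψ_j}`; summing
over the blocks shows that `ζ_q φ` and `ψ` have the same conjugate. -/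

theorem List.le_getD_iff_lt_countP {L : List ℕ} (hL : L.Pairwise (· ≥ ·)) {m : ℕ} (hm : 0 < m)
    (i : ℕ) : m ≤ L.getD i 0 ↔ i < L.countP (m ≤ ·) := by
  induction L generalizing i with
  | nil => simp only [List.getD_nil, List.countP_nil]; omega
  | cons a L ih =>
    obtain ⟨ha, hL⟩ := List.pairwise_cons.mp hL
    by_cases hma : m ≤ a
    · cases i
      · simp [hma]
      · rw [List.getD_cons_succ, ih hL]; simp [hma]
    · have h0 : L.countP (m ≤ ·) = 0 :=
        List.countP_eq_zero.mpr fun x hx hmx => hma ((decide_eq_true_iff.mp hmx).trans (ha x hx))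
      cases i
      · simp [hma, h0]
      · rw [List.getD_cons_succ, ih hL]; simp [hma, h0]

def Multiset.conjPart (ψ : Multiset ℕ+) (m : ℕ) : ℕ := ψ.countP (fun a : ℕ+ => m ≤ (a : ℕ))

theorem Multiset.le_nthPart_iff (ψ : Multiset ℕ+) {m j : ℕ} (hm : 0 < m) (hj : 0 < j) :
    m ≤ ψ.nthPart j ↔ j ≤ ψ.conjPart m := by
  have hL := List.pairwise_reverse.mpr (Multiset.pairwise_sort (ψ.map ((↑·) : ℕ+ → ℕ)) (· ≤ ·))
  rw [Multiset.nthPart, List.le_getD_iff_lt_countP hL hm, List.countP_reverse,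
    ← Multiset.coe_countP, Multiset.sort_eq, Multiset.countP_map, conjPart,
    Multiset.countP_eq_card_filter]
  omega

theorem Multiset.nthPart_le_nthPart (ψ : Multiset ℕ+) {i j : ℕ} (hi : 0 < i) (hij : i ≤ j) :
    ψ.nthPart j ≤ ψ.nthPart i := by
  obtain hj | hj := Nat.eq_zero_or_pos (ψ.nthPart j)
  · exact hj ▸ Nat.zero_le _
  · exact (ψ.le_nthPart_iff hj hi).mpr <|
      hij.trans <| (ψ.le_nthPart_iff hj (hi.trans_le hij)).mp le_rfl

theorem Multiset.count_add_conjPart_succ (ψ : Multiset ℕ+) (v : ℕ+) :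
    ψ.count v + ψ.conjPart (v + 1) = ψ.conjPart v := by
  induction ψ using Multiset.induction_on with
  | empty => simp [conjPart]
  | cons a ψ ih =>
    simp only [conjPart, Multiset.count_cons, Multiset.countP_cons, ← PNat.coe_inj] at *
    split_ifs <;> omega

theorem Multiset.eq_of_conjPart_succ_eq {s t : Multiset ℕ+}
    (h : ∀ m, s.conjPart (m + 1) = t.conjPart (m + 1)) : s = t := by
  ext v
  have hs := s.count_add_conjPart_succ v
  have ht := t.count_add_conjPart_succ v
  obtain ⟨m, hm⟩ : ∃ m, (v : ℕ) = m + 1 := ⟨_, (Nat.succ_pred_eq_of_pos v.pos).symm⟩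
  have h₁ := h m
  have h₂ := h (m + 1)
  rw [hm] at hs ht
  omega

theorem Multiset.countP_replicate {α : Type*} (p : α → Prop) [DecidablePred p] (n : ℕ) (a : α) :
    (Multiset.replicate n a).countP p = if p a then n else 0 := by
  induction n with
  | zero => simp
  | succ n ih =>
    rw [Multiset.replicate_succ, Multiset.countP_cons, ih]
    split_ifs <;> rfl

theorem Multiset.sum_map_ite_eq_countP_mul {α : Type*} (s : Multiset α) (p : α → Prop)
    [DecidablePred p] (c : ℕ) : (s.map fun a => if p a then c else 0).sum = s.countP p * c := by
  induction s using Multiset.induction_on with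
  | empty => simp
  | cons a s ih =>
    rw [Multiset.map_cons, Multiset.sum_cons, ih, Multiset.countP_cons]
    split_ifs <;> ring

theorem zetaPiece_eq (q : ℕ) (a : ℕ+) :
    zetaPiece q a = Multiset.replicate ((a : ℕ) % q) ((a : ℕ) / q).succPNat +
      if h : 0 < (a : ℕ) / q then Multiset.replicate (q - (a : ℕ) % q) (((a : ℕ) / q).toPNat h)
      else 0 :=
  rfl

theorem conjPart_zetaPiece {q : ℕ} (hq : 0 < q) (a : ℕ+) (m : ℕ) :
    (zetaPiece q a).conjPart (m + 1) = min q ((a : ℕ) - m * q) := by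
  have hdiv := Nat.div_add_mod (a : ℕ) q
  have hmod := Nat.mod_lt (a : ℕ) hq
  have hlt : m < (a : ℕ) / q → m * q + q ≤ q * ((a : ℕ) / q) := fun h => by nlinarith
  have heq : m = (a : ℕ) / q → m * q = q * ((a : ℕ) / q) := fun h => by rw [h, Nat.mul_comm]
  have hgt : (a : ℕ) / q < m → q * ((a : ℕ) / q) + q ≤ m * q := fun h => by nlinarith
  rw [zetaPiece_eq, Multiset.conjPart, Multiset.countP_add]
  split_ifs with hk <;> simp only [Multiset.countP_replicate, Multiset.countP_zero] <;>
    split_ifs <;> simp only [Nat.succPNat_coe, Nat.toPNat, PNat.mk_coe] at * <;> omega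

theorem conjPart_zetaPart {q : ℕ} (hq : 0 < q) (φ : Multiset ℕ+) (m : ℕ) :
    (zetaPart q φ).conjPart (m + 1) = (φ.map fun a : ℕ+ => min q ((a : ℕ) - m * q)).sum := by
  induction φ using Multiset.induction_on with
  | empty => simp [zetaPart, Multiset.conjPart]
  | cons a φ ih =>
    rw [zetaPart, Multiset.cons_bind, Multiset.conjPart, Multiset.countP_add, ← Multiset.conjPart,
      ← Multiset.conjPart, ← zetaPart, ih, conjPart_zetaPiece hq, Multiset.map_cons,
      Multiset.sum_cons]

theorem conjPart_zetaPart_le {q : ℕ} (hq : 0 < q) (φ : Multiset ℕ+) (m : ℕ) :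
    (zetaPart q φ).conjPart (m + 1) ≤ φ.conjPart (m * q + 1) * q := by
  rw [conjPart_zetaPart hq, Multiset.conjPart, ← Multiset.sum_map_ite_eq_countP_mul]
  refine Multiset.sum_map_le_sum_map _ _ fun a _ => ?_
  split_ifs <;> omega

theorem conjPart_mul_le_conjPart_zetaPart {q : ℕ} (hq : 0 < q) (φ : Multiset ℕ+) (m : ℕ) :
    φ.conjPart ((m + 1) * q + 1) * q ≤ (zetaPart q φ).conjPart (m + 1) := by
  rw [conjPart_zetaPart hq, Multiset.conjPart, ← Multiset.sum_map_ite_eq_countP_mul]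
  refine Multiset.sum_map_le_sum_map _ _ fun a _ => ?_
  have := add_one_mul m q
  split_ifs <;> omega

theorem nthPart_zetaPart_le {q : ℕ} (hq : 0 < q) (φ : Multiset ℕ+) (i : ℕ) :
    (zetaPart q φ).nthPart (i * q + 1) ≤ 1 + (zetaPart q φ).nthPart ((i + 1) * q) := by
  set ψ := zetaPart q φ
  set v := ψ.nthPart ((i + 1) * q)
  set N := φ.conjPart ((v + 1) * q + 1)
  by_contra! hgap
  have h₁ : i * q + 1 ≤ ψ.conjPart (v + 1 + 1) :=
    (ψ.le_nthPart_iff (by omega) (by omega)).mp (by omega)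
  have h₂ : ψ.conjPart (v + 1 + 1) ≤ N * q := conjPart_zetaPart_le hq φ (v + 1)
  have h₃ : N * q ≤ ψ.conjPart (v + 1) := conjPart_mul_le_conjPart_zetaPart hq φ v
  have h₄ : (i + 1) * q ≤ N * q :=
    Nat.mul_le_mul_right q (Nat.lt_of_mul_lt_mul_right (a := q) (by omega))
  have h₅ : v + 1 ≤ v := (ψ.le_nthPart_iff (by omega) (by positivity)).mpr (by omega)
  omega

theorem Finset.min_card_sum_sub_mul_card {ι : Type*} (s : Finset ι) (x : ι → ℕ) (k m : ℕ)
    (hx : ∀ j ∈ s, k ≤ x j ∧ x j ≤ k + 1) :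
    min s.card ((∑ j ∈ s, x j) - m * s.card) = (s.filter fun j => m + 1 ≤ x j).card := by
  have hsum : ∑ j ∈ s, x j = k * s.card + (s.filter fun j => k + 1 ≤ x j).card := by
    rw [Finset.card_filter, mul_comm, ← smul_eq_mul, ← Finset.sum_const, ← Finset.sum_add_distrib]
    refine Finset.sum_congr rfl fun j hj => ?_
    have := hx j hj
    split_ifs <;> omega
  have hle := Finset.card_filter_le s fun j => k + 1 ≤ x j
  rcases lt_trichotomy m k with h | rfl | h
  · have : (m + 1) * s.card ≤ k * s.card := Nat.mul_le_mul_right _ h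
    rw [add_one_mul] at this
    rw [Finset.filter_true_of_mem fun j hj => Nat.succ_le_of_lt (h.trans_le (hx j hj).1)]
    omega
  · omega
  · have : (k + 1) * s.card ≤ m * s.card := Nat.mul_le_mul_right _ h
    rw [add_one_mul] at this
    rw [Finset.filter_false_of_mem fun j hj => by have := (hx j hj).2; omega, Finset.card_empty]
    omega

theorem Multiset.card_filter_le_nthPart_Icc (ψ : Multiset ℕ+) (q m i : ℕ) :
    ((Finset.Icc (i * q + 1) ((i + 1) * q)).filter fun j => m + 1 ≤ ψ.nthPart j).card =
      min ((i + 1) * q) (ψ.conjPart (m + 1)) - min (i * q) (ψ.conjPart (m + 1)) := by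
  have hfilter : ((Finset.Icc (i * q + 1) ((i + 1) * q)).filter fun j => m + 1 ≤ ψ.nthPart j) =
      Finset.Icc (i * q + 1) (min ((i + 1) * q) (ψ.conjPart (m + 1))) := by
    ext j
    simp only [Finset.mem_filter, Finset.mem_Icc]
    rcases Nat.eq_zero_or_pos j with rfl | hj
    · omega
    · rw [ψ.le_nthPart_iff (by omega) hj]
      omega
  have : i * q ≤ (i + 1) * q := Nat.mul_le_mul_right q i.le_succ
  rw [hfilter, Nat.card_Icc]
  omega

theorem min_stdPreimageFun_sub_mul {q : ℕ} (hq : 0 < q) (ψ : Multiset ℕ+) (i m : ℕ)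
    (h : ψ.nthPart (i * q + 1) ≤ 1 + ψ.nthPart ((i + 1) * q)) :
    min q (stdPreimageFun q ψ (i + 1) - m * q) =
      min ((i + 1) * q) (ψ.conjPart (m + 1)) - min (i * q) (ψ.conjPart (m + 1)) := by
  have hcard : (Finset.Icc (i * q + 1) ((i + 1) * q)).card = q := by
    rw [Nat.card_Icc, add_one_mul]
    omega
  have hblock := Finset.min_card_sum_sub_mul_card (Finset.Icc (i * q + 1) ((i + 1) * q))
    ψ.nthPart (ψ.nthPart ((i + 1) * q)) m fun j hj => by
      rw [Finset.mem_Icc] at hj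
      have := ψ.nthPart_le_nthPart (by omega) hj.1
      exact ⟨ψ.nthPart_le_nthPart (by omega) hj.2, by omega⟩
  rw [hcard] at hblock
  rw [stdPreimageFun, Nat.add_sub_cancel, hblock, ψ.card_filter_le_nthPart_Icc]

-- At most `card ψ` blocks are nonempty; the empty ones are dropped.
def stdPreimage (q : ℕ) (ψ : Multiset ℕ+) : Multiset ℕ+ :=
  ((Finset.range (Multiset.card ψ)).filter fun i => 0 < stdPreimageFun q ψ (i + 1)).val.map
    fun i => (stdPreimageFun q ψ (i + 1)).toPNat'

theorem conjPart_zetaPart_stdPreimage {q : ℕ} (hq : 0 < q) (ψ : Multiset ℕ+) (m : ℕ) :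
    (zetaPart q (stdPreimage q ψ)).conjPart (m + 1) =
      ∑ i ∈ Finset.range (Multiset.card ψ), min q (stdPreimageFun q ψ (i + 1) - m * q) := by
  rw [conjPart_zetaPart hq, stdPreimage, Multiset.map_map, Finset.sum_map_val]
  refine (Finset.sum_congr rfl fun i hi => ?_).trans (Finset.sum_filter_of_ne fun i _ hi => ?_)
  · rw [Function.comp_apply, PNat.toPNat'_coe (Finset.mem_filter.mp hi).2]
  · exact Nat.pos_of_ne_zero fun h => hi (by simp [h])

theorem zetaPart_stdPreimage {q : ℕ} (hq : 0 < q) (ψ : Multiset ℕ+)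
    (h : ∀ i, ψ.nthPart (i * q + 1) ≤ 1 + ψ.nthPart ((i + 1) * q)) :
    zetaPart q (stdPreimage q ψ) = ψ := by
  refine Multiset.eq_of_conjPart_succ_eq fun m => ?_
  have hmono : Monotone fun i => min (i * q) (ψ.conjPart (m + 1)) :=
    fun i j hij => min_le_min_right _ (Nat.mul_le_mul_right q hij)
  have hc : ψ.conjPart (m + 1) ≤ Multiset.card ψ := Multiset.countP_le_card _ _
  have hcq : Multiset.card ψ ≤ Multiset.card ψ * q := Nat.le_mul_of_pos_right _ hq
  rw [conjPart_zetaPart_stdPreimage hq, Finset.sum_congr rfl fun i _ =>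
    min_stdPreimageFun_sub_mul hq ψ i m (h i), Finset.sum_range_tsub hmono]
  simp only [zero_mul, Nat.zero_min, Nat.sub_zero]
  omega

/-- A partition `ψ` lies in the image of `ζ_q` if and only if
`ψ_{(i-1)q+1} ≤ 1 + ψ_{iq}` for all `i ≥ 1`. -/
theorem mem_range_zetaPart_iff (q : ℕ) (hq : 1 ≤ q) (ψ : Multiset ℕ+) :
    (∃ φ : Multiset ℕ+, zetaPart q φ = ψ) ↔
      ∀ i : ℕ, 1 ≤ i → ψ.nthPart ((i - 1) * q + 1) ≤ 1 + ψ.nthPart (i * q) := by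
  constructor
  · rintro ⟨φ, rfl⟩ i hi
    obtain ⟨i, rfl⟩ := Nat.exists_eq_add_of_le' hi
    simpa using nthPart_zetaPart_le hq φ i
  · intro h
    exact ⟨stdPreimage q ψ, zetaPart_stdPreimage hq ψ fun i => by simpa using h (i + 1) i.succ_pos⟩
end

section
/- Let q ≥ 1 and ζ_q : Part → Part as above. If a partition ψ satisfies ψ_{(i−1)q+1} ≤ 1 + ψ_{iq} for all i ≥ 1, then the sequence φ defined by φ_i := ψ_{(i−1)q+1} + ψ_{(i−1)q+2} + ... + ψ_{iq} is a partition (i.e. decreasing) and satisfies ζ_q(φ) = ψ. -/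
/-!
Sort `ψ` decreasingly and cut it into consecutive blocks of `q` parts, padding the last one
with zeros. By the hypothesis the entries of each block differ by at most one, and a multiset of
`q` naturals with this property is determined by its sum `a`: it consists of `a % q` copies of
`a / q + 1` and `q - a % q` copies of `a / q`. Hence `ζ_q` sends the block sum `φ_i` to the
nonzero entries of the `i`-th block, and `ζ_q(φ) = ψ` follows by splitting off one block at a
time.
-/

namespace List

theorem SortedGE.getD_antitone {α : Type*} [Preorder α] {l : List α} (hl : l.SortedGE) {d : α}
    (hd : ∀ x ∈ l, d ≤ x) : Antitone (l.getD · d) := by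
  intro i j hij
  by_cases hj : j < l.length
  · simp only [getD_eq_getElem _ _ hj, getD_eq_getElem _ _ (hij.trans_lt hj)]
    exact hl.getElem_ge_getElem_of_le hij
  · simp only [getD_eq_default _ _ (not_lt.mp hj)]
    by_cases hi : i < l.length
    · simp only [getD_eq_getElem _ _ hi]
      exact hd _ (getElem_mem hi)
    · simp only [getD_eq_default _ _ (not_lt.mp hi), le_refl]

theorem map_getD_range {α : Type*} (l : List α) (d : α) (n : ℕ) :
    (range n).map (l.getD · d) = l.take n ++ replicate (n - l.length) d := by
  apply ext_getElem (by simp; omega)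
  intro j h1 h2
  simp only [length_map, length_range] at h1
  simp only [getElem_map, getElem_range, getElem_append, length_take, lt_min_iff, h1, true_and,
    getElem_take, getElem_replicate]
  split_ifs with hj
  · exact getD_eq_getElem _ _ hj
  · exact getD_eq_default _ _ (not_lt.mp hj)

theorem sortedGE_of_antitone_getD {α : Type*} [Preorder α] {l : List α} {d : α}
    (h : Antitone (l.getD · d)) : l.SortedGE :=
  sortedGE_of_getElem_ge_getElem_of_le fun i j hi hj hji => by
    simpa only [getD_eq_getElem _ _ hi, getD_eq_getElem _ _ hj] using h hji

end List

namespace Multiset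

theorem eq_replicate_div_add_replicate_div {t : Multiset ℕ} {q : ℕ} (hcard : card t = q)
    (hclose : ∀ x ∈ t, ∀ y ∈ t, x ≤ y + 1) :
    t = replicate (t.sum % q) (t.sum / q + 1) + replicate (q - t.sum % q) (t.sum / q) := by
  rcases eq_or_ne t 0 with rfl | ht
  · subst hcard; simp
  obtain ⟨m, hm, hmin⟩ := t.exists_min_image id ht
  have hsplit : t = replicate (t.count (m + 1)) (m + 1) + replicate (t.count m) m := by
    rw [← filter_eq, ← filter_eq]
    conv_lhs => rw [← filter_add_not (Eq (m + 1)) t]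
    congr 1
    refine filter_congr fun x hx => ?_
    have := hmin x hx; have := hclose x hx m hm
    simp only [id] at *; omega
  set c₁ := t.count (m + 1)
  set c₀ := t.count m
  have hc₀ : 0 < c₀ := count_pos.mpr hm
  have hc : c₁ + c₀ = q := by
    rw [← hcard, hsplit]; simp
  have hsum : t.sum = c₁ + m * q := by
    rw [hsplit]; simp only [sum_add, sum_replicate, smul_eq_mul]; rw [← hc]; ring
  have hdiv : t.sum / q = m := by
    rw [hsum, Nat.add_mul_div_right _ _ (by omega), Nat.div_eq_of_lt (by omega), zero_add]
  have hmod : t.sum % q = c₁ := by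
    rw [hsum, Nat.add_mul_mod_self_right, Nat.mod_eq_of_lt (by omega)]
  rw [hdiv, hmod, show q - c₁ = c₀ by omega]
  exact hsplit

end Multiset

theorem map_coe_zetaPiece (q : ℕ) (a : ℕ+) :
    (zetaPiece q a).map (↑) = (Multiset.replicate (a % q) (a / q + 1) +
      Multiset.replicate (q - a % q) ((a : ℕ) / q)).filter (· ≠ 0) := by
  rw [zetaPiece, Multiset.map_add, Multiset.filter_add]
  congr 1
  · rw [Multiset.filter_eq_self.mpr fun x hx =>
      (Multiset.eq_of_mem_replicate hx).trans_ne (Nat.succ_ne_zero _)]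
    exact Multiset.map_replicate _ _ _
  · split_ifs with h
    · rw [Multiset.filter_eq_self.mpr fun x hx => (Multiset.eq_of_mem_replicate hx).trans_ne h.ne']
      exact Multiset.map_replicate _ _ _
    · rw [Multiset.map_zero, eq_comm, Multiset.filter_eq_nil]
      exact fun x hx =>
        not_not.mpr ((Multiset.eq_of_mem_replicate hx).trans (Nat.eq_zero_of_not_pos h))

theorem zetaPiece_eq_of_balanced {q : ℕ} {a : ℕ+} {s : Multiset ℕ+} {t : Multiset ℕ}
    (hcard : Multiset.card t = q) (hclose : ∀ x ∈ t, ∀ y ∈ t, x ≤ y + 1) (hsum : t.sum = a)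
    (hs : t.filter (· ≠ 0) = s.map (↑)) : zetaPiece q a = s := by
  apply Multiset.map_injective PNat.coe_injective
  rw [map_coe_zetaPiece, ← hs, ← hsum, ← Multiset.eq_replicate_div_add_replicate_div hcard hclose]

namespace Multiset

theorem nthPart_antitone (ψ : Multiset ℕ+) : Antitone ψ.nthPart := fun _ _ hij =>
  List.SortedGE.getD_antitone (List.sortedGE_reverse.mpr (pairwise_sort _ _).sortedLE)
    (fun _ _ => Nat.zero_le _) (Nat.sub_le_sub_right hij 1)

theorem nthPart_coe {L : List ℕ+} (hL : L.SortedGE) (i : ℕ) :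
    (L : Multiset ℕ+).nthPart (i + 1) = (L.map (↑)).getD i 0 := by
  have hsort : ((L : Multiset ℕ+).map ((↑) : ℕ+ → ℕ)).sort (· ≤ ·) = (L.map (↑)).reverse := by
    refine List.Perm.eq_of_sortedLE (pairwise_sort _ _).sortedLE
      (List.sortedLE_reverse.mpr (hL.pairwise.map PNat.val fun _ _ h => h).sortedGE) ?_
    rw [← coe_eq_coe, sort_eq, coe_reverse, map_coe]
  rw [nthPart, hsort, List.reverse_reverse, Nat.add_sub_cancel]

theorem nthPart_coe_drop {L : List ℕ+} (hL : L.SortedGE) (n : ℕ) {i : ℕ} (hi : 0 < i) :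
    ((L.drop n : List ℕ+) : Multiset ℕ+).nthPart i = (L : Multiset ℕ+).nthPart (n + i) := by
  obtain ⟨i, rfl⟩ := Nat.exists_eq_add_of_lt hi
  rw [zero_add, ← add_assoc, nthPart_coe (hL.pairwise.sublist (List.drop_sublist _ _)).sortedGE,
    nthPart_coe hL, List.map_drop]
  simp [List.getD_eq_getElem?_getD]

end Multiset

theorem stdPreimageFun_succ (q : ℕ) (ψ : Multiset ℕ+) (k : ℕ) :
    stdPreimageFun q ψ (k + 1) = ∑ j ∈ Finset.range q, ψ.nthPart (k * q + j + 1) := by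
  rw [stdPreimageFun, Nat.add_sub_cancel, ← Finset.Ico_add_one_right_eq_Icc,
    Finset.sum_Ico_eq_sum_range, show (k + 1) * q + 1 - (k * q + 1) = q by rw [add_mul]; omega]
  simp only [add_right_comm]

theorem stdPreimageFun_succ_le (q : ℕ) (ψ : Multiset ℕ+) {i : ℕ} (hi : 1 ≤ i) :
    stdPreimageFun q ψ (i + 1) ≤ stdPreimageFun q ψ i := by
  obtain ⟨k, rfl⟩ := Nat.exists_eq_add_of_le' hi
  rw [stdPreimageFun_succ, stdPreimageFun_succ]
  exact Finset.sum_le_sum fun j _ => ψ.nthPart_antitone (by nlinarith)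

theorem stdPreimageFun_coe_drop {L : List ℕ+} (hL : L.SortedGE) (q k : ℕ) :
    stdPreimageFun q ((L.drop q : List ℕ+) : Multiset ℕ+) (k + 1) =
      stdPreimageFun q (L : Multiset ℕ+) (k + 2) := by
  rw [stdPreimageFun_succ, stdPreimageFun_succ]
  refine Finset.sum_congr rfl fun j _ => ?_
  rw [Multiset.nthPart_coe_drop hL _ (Nat.succ_pos _),
    show q + (k * q + j + 1) = (k + 1) * q + j + 1 by ring]

theorem zetaPiece_eq_take {q : ℕ} {L : List ℕ+} (hL : L.SortedGE)
    (hblock : (L : Multiset ℕ+).nthPart 1 ≤ 1 + (L : Multiset ℕ+).nthPart q) {a : ℕ+}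
    (ha : (a : ℕ) = stdPreimageFun q L 1) :
    zetaPiece q a = ((L.take q : List ℕ+) : Multiset ℕ+) := by
  set f : ℕ → ℕ := fun j => (L.map (↑)).getD j 0
  have hpart : ∀ j, (L : Multiset ℕ+).nthPart (j + 1) = f j := Multiset.nthPart_coe hL
  have hf : Antitone f := fun i j hij => by
    simpa only [← hpart] using Multiset.nthPart_antitone _ (Nat.succ_le_succ hij)
  refine zetaPiece_eq_of_balanced (t := (Finset.range q).val.map f) (by simp) ?_ ?_ ?_
  · simp only [Multiset.mem_map, Finset.mem_val, Finset.mem_range]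
    rintro _ ⟨i, hi, rfl⟩ _ ⟨j, hj, rfl⟩
    rw [← Nat.sub_add_cancel (show 1 ≤ q by omega), hpart, hpart] at hblock
    have := hf (Nat.zero_le i); have := hf (show j ≤ q - 1 by omega)
    omega
  · rw [ha, stdPreimageFun_succ]
    simp [hpart, Finset.sum_eq_multiset_sum]
  · rw [Finset.range_val, Multiset.range, Multiset.map_coe, List.map_getD_range,
      Multiset.filter_coe, List.filter_append, Multiset.map_coe, List.map_take,
      List.filter_eq_self.mpr ?_, List.filter_eq_nil_iff.mpr (by simp), List.append_nil]
    intro x hx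
    obtain ⟨y, -, rfl⟩ := List.mem_map.mp (List.mem_of_mem_take hx)
    simp

theorem exists_zetaPart_eq {q : ℕ} (hq : 0 < q) {L : List ℕ+} (hL : L.SortedGE)
    (hblock : ∀ k, (L : Multiset ℕ+).nthPart (k * q + 1) ≤
      1 + (L : Multiset ℕ+).nthPart ((k + 1) * q)) :
    ∃ M : List ℕ+, (∀ i, (M.map (↑)).getD i 0 = stdPreimageFun q L (i + 1)) ∧
      zetaPart q M = L := by
  induction hn : L.length using Nat.strong_induction_on generalizing L with
  | _ n ih =>
  rcases L with _ | ⟨x, tl⟩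
  · exact ⟨[], fun i => by simp [stdPreimageFun, Multiset.nthPart], rfl⟩
  set L := x :: tl
  have hdrop (i : ℕ) (hi : 0 < i) := Multiset.nthPart_coe_drop hL q hi
  obtain ⟨M, hM, hζ⟩ := ih _ (by simp [← hn, L]; omega) (L := L.drop q)
    (hL.pairwise.sublist (List.drop_sublist _ _)).sortedGE (fun k => by
      rw [hdrop _ (by omega), hdrop _ (by positivity),
        show q + (k * q + 1) = (k + 1) * q + 1 by ring,
        show q + (k + 1) * q = (k + 1 + 1) * q by ring]
      exact hblock (k + 1)) rfl
  have hpos : 0 < stdPreimageFun q L 1 := by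
    rw [stdPreimageFun_succ]
    refine lt_of_lt_of_le ?_
      (Finset.single_le_sum (fun _ _ => Nat.zero_le _) (Finset.mem_range.mpr hq))
    simp [Multiset.nthPart_coe hL, L]
  obtain ⟨a, ha⟩ : ∃ a : ℕ+, (a : ℕ) = stdPreimageFun q L 1 := ⟨⟨_, hpos⟩, rfl⟩
  refine ⟨a :: M, fun i => ?_, ?_⟩
  · cases i with
    | zero => exact ha
    | succ i => rw [List.map_cons, List.getD_cons_succ, hM, stdPreimageFun_coe_drop hL]
  · rw [zetaPart, ← Multiset.cons_coe, Multiset.cons_bind, ← zetaPart, hζ,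
      zetaPiece_eq_take hL (by simpa using hblock 0) ha, Multiset.coe_add, List.take_append_drop]

/-- If `ψ_{(i-1)q+1} ≤ 1 + ψ_{iq}` for all `i ≥ 1`, then the sequence
`φ_i = ψ_{(i-1)q+1} + ⋯ + ψ_{iq}` is decreasing, determines a partition `φ`,
and `ζ_q(φ) = ψ`. -/
theorem stdPreimage_works (q : ℕ) (hq : 1 ≤ q) (ψ : Multiset ℕ+)
    (hψ : ∀ i : ℕ, 1 ≤ i → ψ.nthPart ((i - 1) * q + 1) ≤ 1 + ψ.nthPart (i * q)) :
    (∀ i : ℕ, 1 ≤ i → stdPreimageFun q ψ (i + 1) ≤ stdPreimageFun q ψ i) ∧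
      ∃ φ : Multiset ℕ+, (∀ i : ℕ, 1 ≤ i → φ.nthPart i = stdPreimageFun q ψ i) ∧
        zetaPart q φ = ψ := by
  obtain ⟨L, hL, rfl⟩ : ∃ L : List ℕ+, L.SortedGE ∧ (L : Multiset ℕ+) = ψ :=
    ⟨ψ.sort (· ≥ ·), (ψ.pairwise_sort _).sortedGE, ψ.sort_eq _⟩
  refine ⟨fun i hi => stdPreimageFun_succ_le q _ hi, ?_⟩
  obtain ⟨M, hM, hζ⟩ := exists_zetaPart_eq hq hL fun k => by simpa using hψ (k + 1) (by omega)
  have hM_sorted : M.SortedGE := by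
    have hcoe : StrictMono ((↑) : ℕ+ → ℕ) := fun _ _ h => h
    refine hcoe.sortedGE_listMap.mp (List.sortedGE_of_antitone_getD (d := 0) ?_)
    simp only [hM]
    exact antitone_nat_of_succ_le fun i => stdPreimageFun_succ_le q _ (Nat.le_add_left 1 i)
  refine ⟨M, fun i hi => ?_, hζ⟩
  obtain ⟨i, rfl⟩ := Nat.exists_eq_add_of_le' hi
  rw [Multiset.nthPart_coe hM_sorted, hM]
end

section
/- Let K be a field, f ∈ K[T] monic irreducible of inseparability degree q, and x : V → V an f-primary endomorphism of a finite-dimensional K-vector space satisfying inv_{(i−1)q+1} x ≤ 1 + inv_{iq} x for all i ≥ 1. Then x admits a Jordan-Chevalley decomposition x = s + n with s semisimple, n nilpotent and sn = ns. -/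
/-!
Cut the cyclic blocks `K[X]/(f^{ψ i})` of `x`, taken in decreasing order, into consecutive groups
of `q` blocks (the last group possibly shorter). The inequalities say that within a group the
exponents `E 0 ≥ ⋯ ≥ E (c-1)` differ by at most one, and that a short last group consists of
blocks `K[X]/(f)`; hence `λ = ∑ E j ≤ q E j + j` for every `j`.

For one group let `L = K[X]/(f)`, `S` the class of `X` in `L`, `W = L[N]/(N^λ)` and `w = S + N`.
Over `L` we have `f = (X - S)^q g` with `g(S) ≠ 0`, so `f(w) = N^q g(w)` with `g(w)` a unit,
and `f(w)^{E j} N^j = 0`. Therefore `[p]_j ↦ p(w) N^j` is a well defined map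
`⨁ j, K[X]/(f^{E j}) → W` intertwining `X` with `w`. Its image is a `K[w]`-submodule containing
`N^j` for `j < c`; since `W = K[w] + N W` and `N^q ∈ f(w) W`, induction along the `N`-adic
filtration shows that it is all of `W`. Both sides have dimension `λ deg f`, so the map is an
isomorphism, and `w = S + N` with `f(S) = 0` and `N` nilpotent gives the decomposition.
-/

open Polynomial

/-- The sequence (1-indexed) of multiplicities of `f` in the invariant factors,
extended by `0`. -/
def invSeq {r : ℕ} (ψ : Fin r → ℕ) (j : ℕ) : ℕ :=
  if h : j - 1 < r then ψ ⟨j - 1, h⟩ else 0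

section

variable {K : Type*} [Field K]

/-- A Jordan-Chevalley decomposition whose semisimple part is a root of `f`; when `f` is
irreducible, the minimal polynomial of that part divides `f` and is therefore squarefree. -/
def HasJordanChevalleyDecomp {A : Type*} [Ring A] [Algebra K A] (f : K[X]) (a : A) : Prop :=
  ∃ s n : A, a = s + n ∧ aeval s f = 0 ∧ IsNilpotent n ∧ Commute s n

namespace HasJordanChevalleyDecomp

variable {A B : Type*} [Ring A] [Algebra K A] [Ring B] [Algebra K B] {f : K[X]}

theorem map {a : A} (h : HasJordanChevalleyDecomp f a) (φ : A →ₐ[K] B) :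
    HasJordanChevalleyDecomp f (φ a) := by
  obtain ⟨s, n, rfl, hs, hn, hsn⟩ := h
  exact ⟨φ s, φ n, map_add φ s n, by rw [aeval_algHom_apply, hs, map_zero], hn.map φ,
    hsn.map φ⟩

theorem prod {a : A} {b : B} (ha : HasJordanChevalleyDecomp f a)
    (hb : HasJordanChevalleyDecomp f b) : HasJordanChevalleyDecomp f (a, b) := by
  obtain ⟨s, n, rfl, hs, hn, hsn⟩ := ha
  obtain ⟨s', n', rfl, hs', hn', hsn'⟩ := hb
  refine ⟨(s, s'), (n, n'), rfl, ?_, ?_, Prod.ext hsn hsn'⟩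
  · rw [Prod.ext_iff]
    exact ⟨(aeval_algHom_apply (AlgHom.fst K A B) _ f).symm.trans hs,
      (aeval_algHom_apply (AlgHom.snd K A B) _ f).symm.trans hs'⟩
  · obtain ⟨k, hk⟩ := hn
    obtain ⟨k', hk'⟩ := hn'
    exact ⟨k + k', Prod.ext (pow_eq_zero_of_le (k.le_add_right k') hk)
      (pow_eq_zero_of_le (k'.le_add_left k) hk')⟩

variable {V V' : Type*} [AddCommGroup V] [Module K V] [AddCommGroup V'] [Module K V']

theorem of_intertwining (e : V ≃ₗ[K] V') {x : Module.End K V} {x' : Module.End K V'}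
    (he : ∀ v, e (x v) = x' (e v)) (h : HasJordanChevalleyDecomp f x') :
    HasJordanChevalleyDecomp f x := by
  have hx : x = e.symm.conjAlgEquiv K x' := by
    ext v
    simp [LinearEquiv.conjAlgEquiv_apply, ← he]
  exact hx ▸ h.map (e.symm.conjAlgEquiv K).toAlgHom

theorem prodMap {x : Module.End K V} {x' : Module.End K V'} (h : HasJordanChevalleyDecomp f x)
    (h' : HasJordanChevalleyDecomp f x') : HasJordanChevalleyDecomp f (x.prodMap x') :=
  (h.prod h').map (LinearMap.prodMapAlgHom K V V')

end HasJordanChevalleyDecomp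

noncomputable def mulRootPi (f : K[X]) {ι : Type*} (ψ : ι → ℕ) :
    Module.End K ((i : ι) → AdjoinRoot (f ^ ψ i)) :=
  LinearMap.pi fun i => Algebra.lmul K _ (AdjoinRoot.root (f ^ ψ i)) ∘ₗ LinearMap.proj i

@[simp] theorem mulRootPi_apply (f : K[X]) {ι : Type*} (ψ : ι → ℕ)
    (v : (i : ι) → AdjoinRoot (f ^ ψ i)) (i : ι) :
    mulRootPi f ψ v i = AdjoinRoot.root (f ^ ψ i) * v i :=
  rfl

theorem hasJordanChevalleyDecomp_mulRootPi_append {f : K[X]} {m n : ℕ} (ψ : Fin (m + n) → ℕ)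
    (h₁ : HasJordanChevalleyDecomp f (mulRootPi f fun j : Fin m => ψ (Fin.castAdd n j)))
    (h₂ : HasJordanChevalleyDecomp f (mulRootPi f fun j : Fin n => ψ (Fin.natAdd m j))) :
    HasJordanChevalleyDecomp f (mulRootPi f ψ) :=
  (h₁.prodMap h₂).of_intertwining
    ((LinearEquiv.piCongrLeft K _ finSumFinEquiv).symm.trans
      (LinearEquiv.sumPiEquivProdPi K _ _ _)) fun _ => rfl

theorem Fin.sum_le_mul_add_of_antitone {c : ℕ} {E : Fin c → ℕ} (hE : Antitone E)
    (hspread : ∀ k j, E k ≤ E j + 1) (j : Fin c) : ∑ k, E k ≤ c * E j + j := by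
  have hle : ∀ k, E k ≤ E j + if k < j then 1 else 0 := by
    intro k
    split_ifs with hkj
    · exact hspread k j
    · exact (hE (not_lt.mp hkj)).trans le_self_add
  calc ∑ k, E k ≤ ∑ k, (E j + if k < j then 1 else 0) := Finset.sum_le_sum fun k _ => hle k
    _ = c * E j + j := by
      rw [Finset.sum_add_distrib, Finset.sum_const, Finset.card_univ, Fintype.card_fin,
        smul_eq_mul, Finset.sum_boole]
      simp [Finset.filter_gt_eq_Iio]

section invSeq

variable {r : ℕ} {ψ : Fin r → ℕ}

theorem le_invSeq_one (hψ : Antitone ψ) (k : Fin r) : ψ k ≤ invSeq ψ 1 := by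
  have h0 : 1 - 1 < r := k.pos
  rw [invSeq, dif_pos h0]
  exact hψ (Fin.le_def.mpr (Nat.zero_le _))

theorem invSeq_le_of_lt (hψ : Antitone ψ) {m : ℕ} {j : Fin r} (hj : j.val < m) :
    invSeq ψ m ≤ ψ j := by
  unfold invSeq
  split_ifs with hm
  · exact hψ (Fin.le_def.mpr (show (j : ℕ) ≤ m - 1 by omega))
  · exact Nat.zero_le _

theorem invSeq_eq_zero {m : ℕ} (hm : r < m) : invSeq ψ m = 0 :=
  dif_neg (by omega)

theorem invSeq_natAdd {q : ℕ} (ψ : Fin (q + r) → ℕ) {m : ℕ} (hm : 1 ≤ m) :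
    invSeq (fun j : Fin r => ψ (Fin.natAdd q j)) m = invSeq ψ (m + q) := by
  unfold invSeq
  by_cases h : m - 1 < r
  · rw [dif_pos h, dif_pos (by omega)]
    exact congrArg ψ (Fin.ext (by simp only [Fin.val_natAdd]; omega))
  · rw [dif_neg h, dif_neg (by omega)]

end invSeq

section Generation

variable {W : Type*} [CommRing W] [Algebra K W]

theorem sub_dvd_aeval_sub {R : Type*} [CommRing R] [Algebra R W] (a b : W) (p : R[X]) :
    a - b ∣ aeval a p - aeval b p := by
  simpa only [aeval_def, eval_map] using sub_dvd_eval_sub a b (p.map (algebraMap R W))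

theorem Submodule.aeval_mul_mem {M : Submodule K W} {w : W} (hM : ∀ z ∈ M, w * z ∈ M)
    (p : K[X]) {z : W} (hz : z ∈ M) : aeval w p * z ∈ M := by
  induction p using Polynomial.induction_on generalizing z with
  | C a => rw [aeval_C, ← Algebra.smul_def]; exact M.smul_mem a hz
  | add p p' hp hp' => rw [map_add, add_mul]; exact M.add_mem (hp hz) (hp' hz)
  | monomial n a h =>
    rw [pow_succ, ← mul_assoc, map_mul, aeval_X, mul_assoc]
    exact h (hM z hz)

theorem Submodule.eq_top_of_aeval_mul_pow_mem {M : Submodule K W} {w N u : W} {f : K[X]}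
    {q c l : ℕ} (hM : ∀ z ∈ M, w * z ∈ M) (hq : 0 < q) (hN : N ^ l = 0)
    (hfw : aeval w f = N ^ q * u) (hu : IsUnit u)
    (hW : ∀ z, ∃ (p : K[X]) (d : W), z = aeval w p + N * d) (hcl : c < l → q ≤ c)
    (hgen : ∀ j < c, ∀ p : K[X], aeval w p * N ^ j ∈ M) : M = ⊤ := by
  obtain ⟨v, huv⟩ := hu.exists_right_inv
  have hfilt : ∀ m z, ∃ z', z - N ^ m * z' ∈ M := by
    intro m
    induction m using Nat.strong_induction_on with
    | _ m ih =>
    rcases m with _ | m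
    · exact fun z => ⟨z, by simp⟩
    have hstep : ∀ p : K[X], ∃ y, aeval w p * N ^ m - N ^ (m + 1) * y ∈ M := by
      intro p
      by_cases hmc : m < c
      · exact ⟨0, by simpa using hgen m hmc p⟩
      by_cases hlm : l ≤ m
      · exact ⟨0, by simp [pow_eq_zero_of_le hlm hN]⟩
      obtain ⟨k, rfl⟩ : ∃ k, m = q + k := ⟨m - q, by have := hcl (by omega); omega⟩
      -- `N ^ (q + k) = f(w) * (u⁻¹ * N ^ k)`, and `u⁻¹ * N ^ k` is known modulo `N ^ (k + 1)`
      obtain ⟨y, hy⟩ := ih (k + 1) (by omega) (v * N ^ k)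
      refine ⟨aeval w p * u * y, ?_⟩
      convert Submodule.aeval_mul_mem hM (p * f) hy using 1
      rw [map_mul, hfw]
      linear_combination (-(aeval w p * N ^ (q + k))) * huv
    intro z
    obtain ⟨z₁, hz₁⟩ := ih m m.lt_succ_self z
    obtain ⟨p, d, rfl⟩ := hW z₁
    obtain ⟨y, hy⟩ := hstep p
    refine ⟨d + y, ?_⟩
    convert M.add_mem hz₁ hy using 1
    ring
  refine eq_top_iff.mpr fun z _ => ?_
  obtain ⟨z', hz'⟩ := hfilt l z
  simpa [hN] using hz'

end Generation

namespace AdjoinRoot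

variable {F : Type*} [Field F] {h : F[X]}

theorem finite_of_monic (hh : h.Monic) : Module.Finite F (AdjoinRoot h) :=
  (powerBasis' hh).finite

theorem finrank_of_monic (hh : h.Monic) : Module.finrank F (AdjoinRoot h) = h.natDegree := by
  rw [(powerBasis' hh).finrank, powerBasis'_dim]

theorem finrank_pi_pow {ι : Type*} [Fintype ι] (hh : h.Monic) (E : ι → ℕ) :
    Module.finrank F ((i : ι) → AdjoinRoot (h ^ E i)) = h.natDegree * ∑ i, E i := by
  have := fun i => finite_of_monic (hh.pow (E i))
  rw [Module.finrank_pi_fintype, Finset.mul_sum]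
  simp [finrank_of_monic (hh.pow _), natDegree_pow, mul_comm]

variable {W : Type*} [CommRing W] [Algebra F W]

/-- The map `[p] ↦ p(w) * y`, computed on the remainder modulo `h`; it is well defined when
`h(w) * y = 0`. -/
noncomputable def mulAeval (hh : h.Monic) (w y : W) : AdjoinRoot h →ₗ[F] W :=
  LinearMap.mulRight F y ∘ₗ (aeval w).toLinearMap ∘ₗ modByMonicHom hh

variable {hh : h.Monic} {w y : W}

theorem mulAeval_mk (hy : aeval w h * y = 0) (p : F[X]) :
    mulAeval hh w y (mk h p) = aeval w p * y := by
  conv_rhs => rw [← modByMonic_add_div p h]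
  simp only [mulAeval, LinearMap.coe_comp, Function.comp_apply, modByMonicHom_mk,
    AlgHom.toLinearMap_apply, LinearMap.mulRight_apply, map_add, map_mul, add_mul]
  rw [mul_right_comm, hy, zero_mul, add_zero]

theorem mulAeval_root_mul (hy : aeval w h * y = 0) (a : AdjoinRoot h) :
    mulAeval hh w y (root h * a) = w * mulAeval hh w y a := by
  induction a using AdjoinRoot.induction_on with
  | ih p => rw [← mk_X, ← map_mul, mulAeval_mk hy, mulAeval_mk hy, map_mul, aeval_X, mul_assoc]

end AdjoinRoot

abbrev TruncatedPoly (f : K[X]) (l : ℕ) : Type _ := AdjoinRoot (X ^ l : (AdjoinRoot f)[X])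

namespace TruncatedPoly

variable (f : K[X]) (l : ℕ)

noncomputable def nil : TruncatedPoly f l := AdjoinRoot.root _

noncomputable def root : TruncatedPoly f l := algebraMap (AdjoinRoot f) _ (AdjoinRoot.root f)

variable {f l}

theorem nil_pow : nil f l ^ l = 0 := by
  rw [nil, ← AdjoinRoot.mk_X, ← map_pow, AdjoinRoot.mk_self]

theorem aeval_root : aeval (root f l) f = 0 := by
  rw [root, aeval_algebraMap_apply, AdjoinRoot.aeval_eq, AdjoinRoot.mk_self, map_zero]

theorem hasJordanChevalleyDecomp_root_add_nil :
    HasJordanChevalleyDecomp f (root f l + nil f l) :=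
  ⟨_, _, rfl, aeval_root, ⟨l, nil_pow⟩, Commute.all _ _⟩

theorem exists_eq_aeval_add_nil_mul (z : TruncatedPoly f l) :
    ∃ (p : K[X]) (d : TruncatedPoly f l), z = aeval (root f l + nil f l) p + nil f l * d := by
  obtain ⟨P, rfl⟩ := AdjoinRoot.mk_surjective z
  obtain ⟨p, hp⟩ := AdjoinRoot.mk_surjective (P.coeff 0)
  obtain ⟨d, hd⟩ := sub_dvd_aeval_sub (root f l) (root f l + nil f l) p
  refine ⟨p, AdjoinRoot.mk _ P.divX - d, ?_⟩
  have hconst : algebraMap _ (TruncatedPoly f l) (P.coeff 0) = aeval (root f l) p := by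
    rw [root, aeval_algebraMap_apply, AdjoinRoot.aeval_eq, hp]
  conv_lhs => rw [← X_mul_divX_add P]
  rw [map_add, map_mul, AdjoinRoot.mk_X, AdjoinRoot.mk_C,
    ← AdjoinRoot.algebraMap_eq, hconst]
  change nil f l * _ + _ = _
  linear_combination hd

variable {q : ℕ} {g : (AdjoinRoot f)[X]}

theorem aeval_root_add_nil_eq
    (hfac : f.map (algebraMap K (AdjoinRoot f)) = (X - C (AdjoinRoot.root f)) ^ q * g) :
    aeval (root f l + nil f l) f = nil f l ^ q * aeval (root f l + nil f l) g := by
  rw [← aeval_map_algebraMap (AdjoinRoot f), hfac, map_mul, map_pow, map_sub, aeval_X, aeval_C,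
    ← root, add_sub_cancel_left]

variable [Fact (Irreducible f)]

theorem isUnit_aeval_root_add_nil (hg : g.eval (AdjoinRoot.root f) ≠ 0) :
    IsUnit (aeval (root f l + nil f l) g) := by
  have hconst : aeval (root f l) g = algebraMap _ _ (g.eval (AdjoinRoot.root f)) := by
    rw [root, aeval_algebraMap_apply, coe_aeval_eq_eval]
  obtain ⟨d, hd⟩ := sub_dvd_aeval_sub (root f l + nil f l) (root f l) g
  rw [add_sub_cancel_left, sub_eq_iff_eq_add', hconst] at hd
  rw [hd]
  exact IsNilpotent.isUnit_add_left_of_commute ⟨l, by rw [mul_pow, nil_pow, zero_mul]⟩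
    ((isUnit_iff_ne_zero.mpr hg).map _) (Commute.all _ _)

variable (f l)

theorem finiteDimensional (hf : f.Monic) : FiniteDimensional K (TruncatedPoly f l) :=
  have := AdjoinRoot.finite_of_monic hf
  have := AdjoinRoot.finite_of_monic (monic_X_pow (R := AdjoinRoot f) l)
  Module.Finite.trans (AdjoinRoot f) _

theorem finrank_eq (hf : f.Monic) : Module.finrank K (TruncatedPoly f l) = f.natDegree * l := by
  have := AdjoinRoot.finite_of_monic hf
  rw [← Module.finrank_mul_finrank K (AdjoinRoot f), AdjoinRoot.finrank_of_monic hf,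
    AdjoinRoot.finrank_of_monic (monic_X_pow l), natDegree_X_pow]

end TruncatedPoly

section Group

variable {f : K[X]} {q : ℕ} {g : (AdjoinRoot f)[X]}

theorem pos_of_map_eq_X_sub_C_pow_mul
    (hfac : f.map (algebraMap K (AdjoinRoot f)) = (X - C (AdjoinRoot.root f)) ^ q * g)
    (hg : g.eval (AdjoinRoot.root f) ≠ 0) : 0 < q := by
  refine Nat.pos_of_ne_zero fun hq => hg ?_
  rw [hq, pow_zero, one_mul] at hfac
  rw [← hfac, eval_map, AdjoinRoot.algebraMap_eq, AdjoinRoot.eval₂_root]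

variable [Fact (Irreducible f)]

open TruncatedPoly in
theorem hasJordanChevalleyDecomp_mulRootPi_of_sum_le (hf : f.Monic)
    (hfac : f.map (algebraMap K (AdjoinRoot f)) = (X - C (AdjoinRoot.root f)) ^ q * g)
    (hg : g.eval (AdjoinRoot.root f) ≠ 0) {c : ℕ} (E : Fin c → ℕ)
    (hsum : ∀ j : Fin c, ∑ k, E k ≤ q * E j + j) (hcl : c < ∑ k, E k → q ≤ c) :
    HasJordanChevalleyDecomp f (mulRootPi f E) := by
  set l := ∑ k, E k
  set w := root f l + nil f l
  have hann : ∀ j : Fin c, aeval w (f ^ E j) * nil f l ^ (j : ℕ) = 0 := by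
    intro j
    rw [map_pow, aeval_root_add_nil_eq hfac, mul_pow, ← pow_mul, mul_right_comm, ← pow_add,
      pow_eq_zero_of_le (hsum j) nil_pow, zero_mul]
  let Φ : ((j : Fin c) → AdjoinRoot (f ^ E j)) →ₗ[K] TruncatedPoly f l :=
    LinearMap.lsum K _ K fun j => AdjoinRoot.mulAeval (hf.pow (E j)) w (nil f l ^ (j : ℕ))
  have hΦ : ∀ v, Φ (mulRootPi f E v) = w * Φ v := by
    intro v
    simp [Φ, Finset.mul_sum, AdjoinRoot.mulAeval_root_mul (hann _)]
  have hsurj : Function.Surjective Φ := by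
    refine LinearMap.range_eq_top.mp (Submodule.eq_top_of_aeval_mul_pow_mem ?_
      (pos_of_map_eq_X_sub_C_pow_mul hfac hg) nil_pow (aeval_root_add_nil_eq hfac)
      (isUnit_aeval_root_add_nil hg) exists_eq_aeval_add_nil_mul hcl ?_)
    · rintro _ ⟨v, rfl⟩
      exact ⟨_, hΦ v⟩
    · intro j hj p
      exact ⟨Pi.single ⟨j, hj⟩ (AdjoinRoot.mk _ p),
        (LinearMap.lsum_piSingle K _ K _ _ _).trans (AdjoinRoot.mulAeval_mk (hann _) p)⟩
  have := finiteDimensional f l hf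
  have := fun j => AdjoinRoot.finite_of_monic (hf.pow (E j))
  have hinj := (LinearMap.injective_iff_surjective_of_finrank_eq_finrank
    ((AdjoinRoot.finrank_pi_pow hf E).trans (finrank_eq f l hf).symm)).mpr hsurj
  exact .of_intertwining (x' := Algebra.lmul K _ w) (.ofBijective Φ ⟨hinj, hsurj⟩) hΦ
    (hasJordanChevalleyDecomp_root_add_nil.map _)

theorem hasJordanChevalleyDecomp_mulRootPi_of_antitone (hf : f.Monic)
    (hfac : f.map (algebraMap K (AdjoinRoot f)) = (X - C (AdjoinRoot.root f)) ^ q * g)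
    (hg : g.eval (AdjoinRoot.root f) ≠ 0) {c : ℕ} {E : Fin c → ℕ} (hc : c ≤ q)
    (hE : Antitone E) (hspread : ∀ k j, E k ≤ E j + 1) (hsmall : c < q → ∀ k, E k ≤ 1) :
    HasJordanChevalleyDecomp f (mulRootPi f E) := by
  refine hasJordanChevalleyDecomp_mulRootPi_of_sum_le hf hfac hg E (fun j => ?_) fun hlt => ?_
  · exact (Fin.sum_le_mul_add_of_antitone hE hspread j).trans (by gcongr)
  · by_contra hqc
    have := Finset.sum_le_sum fun k (_ : k ∈ Finset.univ) => hsmall (by omega) k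
    simp only [Finset.sum_const, Finset.card_univ, Fintype.card_fin, smul_eq_mul,
      mul_one] at this
    omega

theorem hasJordanChevalleyDecomp_mulRootPi_of_invSeq (hf : f.Monic)
    (hfac : f.map (algebraMap K (AdjoinRoot f)) = (X - C (AdjoinRoot.root f)) ^ q * g)
    (hg : g.eval (AdjoinRoot.root f) ≠ 0) {r : ℕ} (ψ : Fin r → ℕ) (hψ : Antitone ψ)
    (hineq : ∀ i : ℕ, 1 ≤ i → invSeq ψ ((i - 1) * q + 1) ≤ 1 + invSeq ψ (i * q)) :
    HasJordanChevalleyDecomp f (mulRootPi f ψ) := by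
  induction r using Nat.strong_induction_on with
  | _ r ih =>
  have hq := pos_of_map_eq_X_sub_C_pow_mul hfac hg
  have h1 : invSeq ψ 1 ≤ 1 + invSeq ψ q := by simpa using hineq 1 le_rfl
  have hspread : ∀ k j : Fin r, (j : ℕ) < q → ψ k ≤ ψ j + 1 := fun k j hj => by
    have := le_invSeq_one hψ k
    have := invSeq_le_of_lt hψ hj
    omega
  rcases le_or_gt r q with hrq | hqr
  · refine hasJordanChevalleyDecomp_mulRootPi_of_antitone hf hfac hg hrq hψ
      (fun k j => hspread k j (j.2.trans_le hrq)) fun hrq k => ?_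
    have := le_invSeq_one hψ k
    rw [invSeq_eq_zero hrq] at h1
    omega
  obtain ⟨r, rfl⟩ : ∃ r', r = q + r' := ⟨r - q, by omega⟩
  refine hasJordanChevalleyDecomp_mulRootPi_append ψ
    (hasJordanChevalleyDecomp_mulRootPi_of_antitone hf hfac hg le_rfl
      (hψ.comp_monotone (Fin.strictMono_castAdd r).monotone) (fun k j => hspread _ _ j.2)
      (absurd · (lt_irrefl q)))
    (ih r (by omega) _ (hψ.comp_monotone (Fin.strictMono_natAdd q).monotone) fun i hi => ?_)
  obtain ⟨i, rfl⟩ : ∃ i', i = i' + 1 := ⟨i - 1, by omega⟩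
  rw [invSeq_natAdd ψ (by omega), invSeq_natAdd ψ (by nlinarith)]
  have harg₁ : (i + 1 - 1) * q + 1 + q = (i + 2 - 1) * q + 1 := by
    rw [show i + 2 - 1 = i + 1 by omega, Nat.add_sub_cancel]
    ring
  have harg₂ : (i + 1) * q + q = (i + 2) * q := by ring
  rw [harg₁, harg₂]
  exact hineq (i + 2) (by omega)

end Group

end

theorem jordan_chevalley_of_inv_ineq_general {K V : Type} [Field K] [AddCommGroup V] [Module K V]
    (f : K[X]) (hf : f.Monic) [Fact (Irreducible f)]
    (q : ℕ) (g : Polynomial (AdjoinRoot f))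
    (hfac : f.map (algebraMap K (AdjoinRoot f)) = (X - C (AdjoinRoot.root f)) ^ q * g)
    (hg : Polynomial.eval (AdjoinRoot.root f) g ≠ 0)
    (x : Module.End K V) (r : ℕ) (ψ : Fin r → ℕ)
    (hmono : ∀ i j : Fin r, i ≤ j → ψ j ≤ ψ i)
    (e : V ≃ₗ[K] ((i : Fin r) → AdjoinRoot (f ^ ψ i)))
    (he : ∀ (v : V) (i : Fin r), e (x v) i = AdjoinRoot.root (f ^ ψ i) * e v i)
    (hineq : ∀ i : ℕ, 1 ≤ i → invSeq ψ ((i - 1) * q + 1) ≤ 1 + invSeq ψ (i * q)) :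
    ∃ s n : Module.End K V,
      x = s + n ∧ Squarefree (minpoly K s) ∧ IsNilpotent n ∧ Commute s n := by
  obtain ⟨s, n, hsum, hs, hn, hsn⟩ :=
    (hasJordanChevalleyDecomp_mulRootPi_of_invSeq hf hfac hg ψ hmono hineq).of_intertwining e
      fun v => funext (he v)
  exact ⟨s, n, hsum, (Fact.out : Irreducible f).squarefree.squarefree_of_dvd
    (minpoly.dvd K s hs), hn, hsn⟩

/-- If an `f`-primary endomorphism `x`, with invariant factors `f^{ψ 0} | f^{ψ 1} | ⋯`
(witnessed by a decomposition into cyclic blocks), satisfies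
`inv_{(i-1)q+1} x ≤ 1 + inv_{iq} x` for all `i ≥ 1`, where `q` is the inseparability
degree of `f` (i.e. `f = (T - S)^q · g` over `L = K[S]/(f)` with `g(S) ≠ 0`), then `x`
admits a Jordan-Chevalley decomposition. -/
theorem jordan_chevalley_of_inv_ineq {K V : Type} [Field K] [AddCommGroup V] [Module K V]
    [FiniteDimensional K V] (f : K[X]) (hf : f.Monic) [Fact (Irreducible f)]
    (q : ℕ) (g : Polynomial (AdjoinRoot f))
    (hfac : f.map (algebraMap K (AdjoinRoot f)) = (X - C (AdjoinRoot.root f)) ^ q * g)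
    (hg : Polynomial.eval (AdjoinRoot.root f) g ≠ 0)
    (x : Module.End K V) (r : ℕ) (ψ : Fin r → ℕ)
    (hmono : ∀ i j : Fin r, i ≤ j → ψ j ≤ ψ i) (hpos : ∀ i, 1 ≤ ψ i)
    (e : V ≃ₗ[K] ((i : Fin r) → AdjoinRoot (f ^ ψ i)))
    (he : ∀ (v : V) (i : Fin r), e (x v) i = AdjoinRoot.root (f ^ ψ i) * e v i)
    (hineq : ∀ i : ℕ, 1 ≤ i → invSeq ψ ((i - 1) * q + 1) ≤ 1 + invSeq ψ (i * q)) :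
    ∃ s n : Module.End K V,
      x = s + n ∧ Squarefree (minpoly K s) ∧ IsNilpotent n ∧ Commute s n :=
  jordan_chevalley_of_inv_ineq_general f hf q g hfac hg x r ψ hmono e he hineq
end

section
/- Let K be a field, f ∈ K[T] monic irreducible, L = K[S]/f(S), and x = s + n a Jordan-Chevalley decomposition of an f-primary endomorphism x of a finite-dimensional K-vector space V. Then the K[S]-module structure on V with S acting as s makes V an L-vector space, n is L-linear for this structure, and dim_L V = dim_K V / deg f. -/
/-!
Because `s` commutes with the nilpotent `n`, `f(s)` differs from `f(x) = f(s + n)` by a nilpotent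
element, and `f(x)` is nilpotent since `minpoly x = f ^ k`. A nilpotent polynomial in `s` vanishes
because `minpoly s` is squarefree, so `f(s) = 0` and `S ↦ s` defines `φ : K[S]/(f) → End_K V`.
Its image lies in `K[s]`, hence commutes with `n`, and the tower law
`[L : K] · dim_L V = dim_K V` with `[L : K] = deg f` gives the dimension.
-/

open Polynomial

namespace AdjoinRoot

variable {R A : Type*} [CommRing R] [Ring A] [Algebra R A] (f : R[X])

noncomputable def liftNC (a : A) (ha : aeval a f = 0) : AdjoinRoot f →ₐ[R] A :=
  Ideal.Quotient.liftₐ _ (aeval a) fun p hp => by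
    obtain ⟨q, rfl⟩ := Ideal.mem_span_singleton'.mp hp
    rw [map_mul, ha, mul_zero]

variable {f}

@[simp]
theorem liftNC_mk {a : A} (ha : aeval a f = 0) (p : R[X]) : liftNC f a ha (mk f p) = aeval a p :=
  rfl

@[simp]
theorem liftNC_root {a : A} (ha : aeval a f = 0) : liftNC f a ha (root f) = a := by
  rw [root, liftNC_mk, aeval_X]

theorem commute_liftNC {a b : A} (ha : aeval a f = 0) (hab : Commute a b) (c : AdjoinRoot f) :
    Commute (liftNC f a ha c) b := by
  induction c using AdjoinRoot.induction_on with
  | ih p =>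
    rw [liftNC_mk]
    exact (Algebra.commute_of_mem_adjoin_of_forall_mem_commute (aeval_mem_adjoin_singleton R a)
      (by simpa using hab.symm)).symm

end AdjoinRoot

open scoped IsMulCommutative in
theorem Commute.isNilpotent_aeval_of_isNilpotent_aeval_add {R A : Type*} [CommRing R] [Ring A]
    [Algebra R A] {a b : A} (hab : Commute a b) (hb : IsNilpotent b) {p : R[X]}
    (hp : IsNilpotent (aeval (a + b) p)) : IsNilpotent (aeval a p) := by
  -- Inside the commutative subalgebra generated by `a` and `b`, the commutative-ring lemma applies.
  let B := Algebra.adjoin R {a, b}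
  have : IsMulCommutative B := Algebra.isMulCommutative_adjoin R <| by
    rintro x (rfl | rfl) y (rfl | rfl) <;> first | rfl | exact hab | exact hab.symm
  let a' : B := ⟨a, Algebra.subset_adjoin (by simp)⟩
  let b' : B := ⟨b, Algebra.subset_adjoin (by simp)⟩
  have hval : Function.Injective B.val := Subtype.val_injective
  have hb' : IsNilpotent b' := (IsNilpotent.map_iff hval).mp hb
  have hp' : IsNilpotent (aeval (a' + b') p) := by
    rwa [← IsNilpotent.map_iff hval, ← aeval_algHom_apply]
  have hdiff : IsNilpotent (aeval (a' + b') p - aeval a' p) :=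
    isNilpotent_aeval_sub_of_isNilpotent_sub p (by rwa [add_sub_cancel_left])
  have := (Commute.all _ _).isNilpotent_sub hp' hdiff
  rwa [sub_sub_cancel, ← IsNilpotent.map_iff hval, ← aeval_algHom_apply] at this

theorem minpoly.aeval_eq_zero_of_isNilpotent {K A : Type*} [Field K] [Ring A] [Algebra K A] {a : A}
    (ha : Squarefree (minpoly K a)) {p : K[X]} (hp : IsNilpotent (Polynomial.aeval a p)) :
    Polynomial.aeval a p = 0 := by
  obtain ⟨m, hm⟩ := hp
  have hdvd : minpoly K a ∣ p ^ (m + 1) := minpoly.dvd K a (by rw [map_pow, pow_succ, hm, zero_mul])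
  exact minpoly.dvd_iff.mp ((ha.dvd_pow_iff_dvd m.succ_ne_zero).mp hdvd)

theorem AlgHom.isScalarTower_compHom {K L V : Type*} [CommSemiring K] [Semiring L] [Algebra K L]
    [AddCommMonoid V] [Module K V] (φ : L →ₐ[K] Module.End K V) :
    letI := Module.compHom V φ.toRingHom
    IsScalarTower K L V :=
  let := Module.compHom V φ.toRingHom
  ⟨fun a b v => show φ (a • b) v = a • φ b v by rw [map_smul]; rfl⟩

theorem jordan_chevalley_L_structure_general {K V : Type} [Field K] [AddCommGroup V] [Module K V]
    (f : K[X]) [Fact (Irreducible f)]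
    (x s n : Module.End K V) (k : ℕ) (hprim : minpoly K x = f ^ k)
    (hx : x = s + n) (hs : Squarefree (minpoly K s)) (hn : IsNilpotent n)
    (hc : Commute s n) :
    ∃ φ : AdjoinRoot f →ₐ[K] Module.End K V,
      φ (AdjoinRoot.root f) = s ∧
      (∀ c : AdjoinRoot f, Commute (φ c) n) ∧
      (letI : Module (AdjoinRoot f) V := Module.compHom V φ.toRingHom
       Module.finrank (AdjoinRoot f) V = Module.finrank K V / f.natDegree) := by
  have hfx : IsNilpotent (aeval (s + n) f) := ⟨k, by rw [← map_pow, ← hprim, ← hx, minpoly.aeval]⟩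
  have hfs : aeval s f = 0 :=
    minpoly.aeval_eq_zero_of_isNilpotent hs (hc.isNilpotent_aeval_of_isNilpotent_aeval_add hn hfx)
  let φ := AdjoinRoot.liftNC f s hfs
  refine ⟨φ, AdjoinRoot.liftNC_root hfs, AdjoinRoot.commute_liftNC hfs hc, ?_⟩
  let := Module.compHom V φ.toRingHom
  have := φ.isScalarTower_compHom
  let pb := AdjoinRoot.powerBasis (Fact.out : Irreducible f).ne_zero
  have := pb.finite
  rw [← Module.finrank_div_finrank_cancel_left_of_nontrivial K (AdjoinRoot f) V, pb.finrank,
    AdjoinRoot.powerBasis_dim]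

/-- Let `x = s + n` be a Jordan-Chevalley decomposition of an `f`-primary endomorphism.
Then the `K[S]`-module structure on `V` with `S` acting as `s` makes `V` an `L`-vector
space for `L = K[S]/(f)` (i.e. the action factors through a `K`-algebra homomorphism
`φ : L → End_K(V)` with `φ(S) = s`), `n` is `L`-linear for this structure, and
`dim_L V = dim_K V / deg f`. -/
theorem jordan_chevalley_L_structure {K V : Type} [Field K] [AddCommGroup V] [Module K V]
    [FiniteDimensional K V] (f : K[X]) (hf : f.Monic) [Fact (Irreducible f)]
    (x s n : Module.End K V) (k : ℕ) (hk : 1 ≤ k) (hprim : minpoly K x = f ^ k)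
    (hx : x = s + n) (hs : Squarefree (minpoly K s)) (hn : IsNilpotent n)
    (hc : Commute s n) :
    ∃ φ : AdjoinRoot f →ₐ[K] Module.End K V,
      φ (AdjoinRoot.root f) = s ∧
      (∀ c : AdjoinRoot f, Commute (φ c) n) ∧
      (letI : Module (AdjoinRoot f) V := Module.compHom V φ.toRingHom
       Module.finrank (AdjoinRoot f) V = Module.finrank K V / f.natDegree) :=
  jordan_chevalley_L_structure_general f x s n k hprim hx hs hn hc
end
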